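/- arXiv:2203.03262 — 13 statements merged into one kernel-verified Lean document; each statement's English description precedes it below -/
import Mathlib

section
/- Let R be a commutative ring such that every finitely presented cyclic R-module embeds in a finitely generated free R-module. Then for every finitely generated ideal I of R one has (0 : (0 : I)) = I (the double annihilator of I equals I). -/
namespace Ideal

variable {R : Type*} [CommRing R]

theorem le_annihilator_annihilator (I : Ideal R) :
    I ≤ Submodule.annihilator (Submodule.annihilator I) :=
  Submodule.le_annihilator_iff.mpr (Submodule.mul_annihilator I)

theorem Quotient.smul_linearMap_one_eq_zero {I : Ideal R} {M : Type*} [AddCommGroup M]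
    [Module R M] (f : (R ⧸ I) →ₗ[R] M) {r : R} (hr : r ∈ I) : r • f 1 = 0 := by
  rw [← map_smul, ← Algebra.algebraMap_eq_smul_one, Quotient.algebraMap_eq,
    Quotient.eq_zero_iff_mem.mpr hr, map_zero]

/-- The coordinates of the image of `1` lie in `(0 : I)`; a double annihilator element
therefore kills that image, and injectivity pulls this back to `R ⧸ I`. -/
theorem annihilator_annihilator_le_of_injective {I : Ideal R} {ι : Type*}
    (f : (R ⧸ I) →ₗ[R] (ι → R)) (hf : Function.Injective f) :
    Submodule.annihilator (Submodule.annihilator I) ≤ I := by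
  intro x hx
  have hcoord : ∀ i, f 1 i ∈ Submodule.annihilator I := fun i =>
    Submodule.mem_annihilator.mpr fun r hr => by
      rw [smul_eq_mul, mul_comm]
      exact congrFun (Quotient.smul_linearMap_one_eq_zero f hr) i
  have hkill : x • f 1 = 0 := funext fun i => Submodule.mem_annihilator.mp hx _ (hcoord i)
  rw [← Quotient.eq_zero_iff_mem]
  apply hf
  rw [map_zero, ← Quotient.algebraMap_eq, Algebra.algebraMap_eq_smul_one, map_smul, hkill]

end Ideal

/-- If every finitely presented cyclic `R`-module embeds in a finitely generated free
`R`-module, then the double annihilator of every finitely generated ideal `I` equals `I`. -/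
theorem stmt_0 {R : Type*} [CommRing R]
    (h : ∀ I : Ideal R, I.FG → ∃ (n : ℕ) (f : (R ⧸ I) →ₗ[R] (Fin n → R)),
      Function.Injective f) :
    ∀ I : Ideal R, I.FG →
      Submodule.annihilator (Submodule.annihilator I) = I := by
  intro I hI
  obtain ⟨n, f, hf⟩ := h I hI
  exact le_antisymm (I.annihilator_annihilator_le_of_injective f hf) I.le_annihilator_annihilator
end

section
/- Let R be a local commutative ring with maximal ideal P such that every finitely presented cyclic R-module M admits an exact sequence 0 → M → F → M → 0 with F free. Then R is a valuation ring (its ideals are totally ordered by inclusion), and for every nonzero element a ∈ P one has Ra = P and (0 : a) = Ra. -/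
open IsLocalRing

section Aux

theorem key_lemma {R : Type*} [CommRing R] [IsLocalRing R]
    (h : ∀ I : Ideal R, I.FG →
      ∃ (n : ℕ) (f : (R ⧸ I) →ₗ[R] (Fin n → R)) (g : (Fin n → R) →ₗ[R] (R ⧸ I)),
        Function.Injective f ∧ Function.Surjective g ∧ LinearMap.ker g = LinearMap.range f)
    (I : Ideal R) (hfg : I.FG) (hne : I ≠ ⊥) (hle : I ≤ maximalIdeal R) :
    ∃ b : R, I = Ideal.span {b} ∧ ∀ x : R, x * b = 0 ↔ x ∈ I := by
  obtain ⟨n, f, g, hf, hg, hker⟩ := h I hfg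
  have hItop : (1 : R) ∉ I := fun h1 => (maximalIdeal.isMaximal R).ne_top
    (Ideal.eq_top_iff_one _ |>.mpr (hle h1))
  have hmk : ∀ x y : R, x • Ideal.Quotient.mk I y = Ideal.Quotient.mk I (x * y) := by
    intro x y
    rw [← smul_eq_mul]
    exact (Submodule.Quotient.mk_smul I x y).symm
  set e : Fin n → (Fin n → R) := fun i => Pi.single i (1 : R) with he
  have hei : ∀ i j : Fin n, e i j = if i = j then 1 else 0 := by
    intro i j; rw [he]; simp [Pi.single_apply, eq_comm]
  set v : Fin n → R := f 1 with hv
  have hfx : ∀ x : R, f (Ideal.Quotient.mk I x) = x • v := by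
    intro x
    rw [hv, ← map_smul]
    congr 1
    rw [← Ideal.Quotient.algebraMap_eq, Algebra.algebraMap_eq_smul_one]
  have hmemI : ∀ x : R, x • v = 0 ↔ x ∈ I := by
    intro x
    rw [← hfx, LinearMap.map_eq_zero_iff f hf, Ideal.Quotient.eq_zero_iff_mem]
  have hrange : ∀ y : Fin n → R, g y = 0 → ∃ s : R, y = s • v := by
    intro y hy
    have : y ∈ LinearMap.ker g := hy
    rw [hker] at this
    obtain ⟨z, hz⟩ := this
    obtain ⟨s, rfl⟩ := Ideal.Quotient.mk_surjective z
    exact ⟨s, by rw [← hz, hfx]⟩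
  have hgv : g v = 0 := by
    have : v ∈ LinearMap.range f := ⟨1, rfl⟩
    rw [← hker] at this
    exact this
  obtain ⟨r, hr⟩ : ∃ r : Fin n → R, ∀ i, Ideal.Quotient.mk I (r i) = g (e i) := by
    choose r hr using fun i => Ideal.Quotient.mk_surjective (g (e i))
    exact ⟨r, hr⟩
  have hgw : ∀ w : Fin n → R, g w = Ideal.Quotient.mk I (∑ i, w i * r i) := by
    intro w
    have hw : w = ∑ i, (w i) • e i := by
      funext k
      rw [Finset.sum_apply]
      simp [hei, mul_ite]
    conv_lhs => rw [hw]
    rw [map_sum, map_sum]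
    congr 1; funext i
    rw [map_smul, ← hr i, hmk]
  obtain ⟨i, hi⟩ : ∃ i, IsUnit (r i) := by
    obtain ⟨w, hw1⟩ := hg (Ideal.Quotient.mk I 1)
    rw [hgw] at hw1
    have hsub : (∑ i, w i * r i) - 1 ∈ I := Ideal.Quotient.eq.mp hw1
    by_contra hc
    push_neg at hc
    have hsum : (∑ i, w i * r i) ∈ maximalIdeal R :=
      Ideal.sum_mem _ fun i _ => Ideal.mul_mem_left _ _ ((mem_maximalIdeal _).mpr (hc i))
    have h1 : (1 : R) ∈ maximalIdeal R := by
      have := Ideal.sub_mem _ hsum (hle hsub)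
      simpa using this
    exact (maximalIdeal.isMaximal R).ne_top (Ideal.eq_top_iff_one _ |>.mpr h1)
  set u := hi.unit with hu
  have hui : (u : R) = r i := rfl
  have hn1 : n = 1 := by
    rcases Nat.lt_or_ge n 2 with hlt | hge
    · interval_cases n
      · exact absurd (Ideal.Quotient.eq_zero_iff_mem.mp (hf (Subsingleton.elim _ _))) hItop
      · rfl
    · exfalso
      haveI : Nontrivial (Fin n) := ⟨⟨⟨0, by omega⟩, ⟨1, by omega⟩, by simp [Fin.ext_iff]⟩⟩
      obtain ⟨j, hj⟩ := exists_ne i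
      have hgw1 : g (e j - (r j * (↑u⁻¹ : R)) • e i) = 0 := by
        rw [map_sub, map_smul, ← hr i, ← hr j, hmk, ← map_sub,
          Ideal.Quotient.eq_zero_iff_mem]
        have : r j - r j * ↑u⁻¹ * r i = 0 := by
          rw [← hui, mul_assoc, Units.inv_mul, mul_one, sub_self]
        rw [this]; exact I.zero_mem
      obtain ⟨s, hs⟩ := hrange _ hgw1
      have hsvj : s * v j = 1 := by
        have h1 := congrFun hs j
        rw [Pi.sub_apply, Pi.smul_apply, Pi.smul_apply, smul_eq_mul, smul_eq_mul,
          hei j j, hei i j, if_pos rfl, if_neg (Ne.symm hj)] at h1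
        simpa using h1.symm
      obtain ⟨a, haI, ha0⟩ := Submodule.ne_bot_iff I |>.mp hne
      have hgw2 : g ((a * (↑u⁻¹ : R)) • e i) = 0 := by
        rw [map_smul, ← hr i, hmk, Ideal.Quotient.eq_zero_iff_mem]
        rw [mul_assoc, ← hui, Units.inv_mul, mul_one]
        exact haI
      obtain ⟨t, ht⟩ := hrange _ hgw2
      have htj : t * v j = 0 := by
        have h1 := congrFun ht j
        rw [Pi.smul_apply, Pi.smul_apply, smul_eq_mul, smul_eq_mul, hei i j,
          if_neg (Ne.symm hj), mul_zero] at h1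
        exact h1.symm
      have ht0 : t = 0 := by
        have : t * (s * v j) = 0 := by
          rw [mul_comm s, ← mul_assoc, htj, zero_mul]
        rwa [hsvj, mul_one] at this
      have hti : a * ↑u⁻¹ = 0 := by
        have h1 := congrFun ht i
        rw [Pi.smul_apply, Pi.smul_apply, smul_eq_mul, smul_eq_mul, hei i i, if_pos rfl,
          mul_one, ht0, zero_mul] at h1
        exact h1
      apply ha0
      have h2 := congrArg (· * (u : R)) hti
      simp only [zero_mul] at h2
      rwa [mul_assoc, Units.inv_mul, mul_one] at h2
  subst hn1
  have h0i : (0 : Fin 1) = i := Subsingleton.elim _ _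
  refine ⟨v 0, ?_, ?_⟩
  · apply le_antisymm
    · intro a haI
      have hgw2 : g ((a * (↑u⁻¹ : R)) • e i) = 0 := by
        rw [map_smul, ← hr i, hmk, Ideal.Quotient.eq_zero_iff_mem]
        rw [mul_assoc, ← hui, Units.inv_mul, mul_one]
        exact haI
      obtain ⟨t, ht⟩ := hrange _ hgw2
      have h1 := congrFun ht i
      rw [Pi.smul_apply, Pi.smul_apply, smul_eq_mul, smul_eq_mul, hei i i, if_pos rfl,
        mul_one] at h1
      rw [Ideal.mem_span_singleton, h0i]
      refine ⟨t * ↑u, ?_⟩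
      have h2 := congrArg (· * (u : R)) h1
      rw [mul_assoc, Units.inv_mul, mul_one] at h2
      rw [h2]; ring
    · rw [Ideal.span_singleton_le_iff_mem, h0i]
      have h1 : v i * r i ∈ I := by
        have h2 := hgv
        rw [hgw, Ideal.Quotient.eq_zero_iff_mem] at h2
        have h3 : ∑ k, v k * r k = v i * r i := by
          rw [Fin.sum_univ_one, h0i]
        rwa [h3] at h2
      have h4 : v i = v i * r i * ↑u⁻¹ := by
        rw [mul_assoc, ← hui, Units.mul_inv, mul_one]
      rw [h4]
      exact Ideal.mul_mem_right _ _ h1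
  · intro x
    rw [← hmemI x]
    constructor
    · intro hx
      funext k
      have hk : k = 0 := Subsingleton.elim _ _
      rw [Pi.smul_apply, smul_eq_mul, hk, hx]; rfl
    · intro hx
      have := congrFun hx 0
      rwa [Pi.smul_apply, smul_eq_mul] at this
variable {R : Type*} [CommRing R] [IsLocalRing R]
  (h : ∀ I : Ideal R, I.FG →
      ∃ (n : ℕ) (f : (R ⧸ I) →ₗ[R] (Fin n → R)) (g : (Fin n → R) →ₗ[R] (R ⧸ I)),
        Function.Injective f ∧ Function.Surjective g ∧ LinearMap.ker g = LinearMap.range f)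

include h

theorem ann_eq (a : R) (ha : a ≠ 0) (haP : a ∈ maximalIdeal R) :
    ∀ x : R, x * a = 0 ↔ x ∈ Ideal.span {a} := by
  obtain ⟨b, hIb, hannb⟩ := key_lemma h (Ideal.span {a}) (Submodule.fg_span_singleton a)
    (by rwa [Ne, Ideal.span_singleton_eq_bot])
    (by rwa [Ideal.span_singleton_le_iff_mem])
  obtain ⟨c, hc⟩ : b ∣ a := Ideal.mem_span_singleton.mp
    (hIb ▸ Ideal.mem_span_singleton_self a)
  obtain ⟨d, hd⟩ : a ∣ b := Ideal.mem_span_singleton.mp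
    (hIb ▸ Ideal.mem_span_singleton_self b)
  have hab : a * b = 0 := (hannb a).mpr (Ideal.mem_span_singleton_self a)
  have haa : a * a = 0 := by
    calc a * a = a * b * c := by rw [hc]; ring
    _ = 0 := by rw [hab, zero_mul]
  intro x
  constructor
  · intro hx
    have hxb : x * b = 0 := by
      calc x * b = x * a * d := by rw [hd]; ring
      _ = 0 := by rw [hx, zero_mul]
    exact (hannb x).mp hxb
  · intro hx
    obtain ⟨y, hy⟩ := Ideal.mem_span_singleton.mp hx
    rw [hy, mul_comm a y, mul_assoc, haa, mul_zero]

theorem span_comparable (a b : R) :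
    Ideal.span {a} ≤ Ideal.span {b} ∨ Ideal.span {b} ≤ Ideal.span {a} := by
  rcases eq_or_ne a 0 with rfl | ha
  · left; rw [Ideal.span_singleton_eq_bot.mpr rfl]; exact bot_le
  rcases eq_or_ne b 0 with rfl | hb
  · right; rw [Ideal.span_singleton_eq_bot.mpr rfl]; exact bot_le
  by_cases hua : IsUnit a
  · right; rw [Ideal.span_singleton_eq_top.mpr hua]; exact le_top
  by_cases hub : IsUnit b
  · left; rw [Ideal.span_singleton_eq_top.mpr hub]; exact le_top
  have haP : a ∈ maximalIdeal R := (mem_maximalIdeal a).mpr hua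
  have hbP : b ∈ maximalIdeal R := (mem_maximalIdeal b).mpr hub
  obtain ⟨c, hIc, _⟩ := key_lemma h (Ideal.span {a, b})
    (Submodule.fg_span (Set.toFinite _))
    (by
      intro hbot
      apply ha
      have : a ∈ Ideal.span ({a, b} : Set R) :=
        Ideal.subset_span (Set.mem_insert a {b})
      rw [hbot] at this
      simpa using this)
    (by
      rw [Ideal.span_le]
      rintro x (rfl | rfl)
      · exact haP
      · simp_all)
  have hc0 : c ≠ 0 := by
    intro hc0
    apply ha
    have : a ∈ Ideal.span ({a, b} : Set R) := Ideal.subset_span (Set.mem_insert a {b})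
    rw [hIc, hc0, Ideal.span_singleton_eq_bot.mpr rfl] at this
    simpa using this
  obtain ⟨ra, hra⟩ : c ∣ a := Ideal.mem_span_singleton.mp
    (hIc ▸ Ideal.subset_span (Set.mem_insert a {b}))
  obtain ⟨rb, hrb⟩ : c ∣ b := Ideal.mem_span_singleton.mp
    (hIc ▸ Ideal.subset_span (Set.mem_insert_of_mem a rfl))
  have hcmem : c ∈ Ideal.span ({a, b} : Set R) := by
    rw [hIc]; exact Ideal.mem_span_singleton_self c
  obtain ⟨p, q, hpq⟩ := Ideal.mem_span_pair.mp hcmem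
  -- c = p a + q b = (p ra + q rb) c
  have hkey : (1 - (p * ra + q * rb)) * c = 0 := by
    have : p * a + q * b = (p * ra + q * rb) * c := by
      rw [hra, hrb]; ring
    rw [sub_mul, one_mul, ← this, hpq, sub_self]
  have hnu : ¬ IsUnit (1 - (p * ra + q * rb)) := by
    intro hu
    obtain ⟨w, hw⟩ := hu.exists_left_inv
    apply hc0
    have := congrArg (w * ·) hkey
    simp only [mul_zero] at this
    rwa [← mul_assoc, hw, one_mul] at this
  have hmem : (1 - (p * ra + q * rb)) ∈ maximalIdeal R := (mem_maximalIdeal _).mpr hnu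
  have hsum : (p * ra + q * rb) ∉ maximalIdeal R := by
    intro hs
    have : (1 : R) ∈ maximalIdeal R := by
      have := Ideal.add_mem _ hmem hs
      simpa using this
    exact (maximalIdeal.isMaximal R).ne_top (Ideal.eq_top_iff_one _ |>.mpr this)
  have : IsUnit ra ∨ IsUnit rb := by
    by_contra hcon
    push_neg at hcon
    exact hsum (Ideal.add_mem _
      (Ideal.mul_mem_left _ _ ((mem_maximalIdeal _).mpr hcon.1))
      (Ideal.mul_mem_left _ _ ((mem_maximalIdeal _).mpr hcon.2)))
  rcases this with hu | hu
  · -- ra is a unit, so c ∈ (a), hence (b) ≤ (a)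
    right
    obtain ⟨u, rfl⟩ := hu
    rw [Ideal.span_singleton_le_iff_mem, Ideal.mem_span_singleton]
    have hc : c = a * ↑u⁻¹ := by
      rw [hra, mul_assoc, Units.mul_inv, mul_one]
    exact ⟨↑u⁻¹ * rb, by rw [hrb, hc, mul_assoc]⟩
  · left
    obtain ⟨u, rfl⟩ := hu
    rw [Ideal.span_singleton_le_iff_mem, Ideal.mem_span_singleton]
    have hc : c = b * ↑u⁻¹ := by
      rw [hrb, mul_assoc, Units.mul_inv, mul_one]
    exact ⟨↑u⁻¹ * ra, by rw [hra, hc, mul_assoc]⟩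

theorem final_stmt :
    (∀ I J : Ideal R, I ≤ J ∨ J ≤ I) ∧
    ∀ a : R, a ≠ 0 → a ∈ IsLocalRing.maximalIdeal R →
      Ideal.span {a} = IsLocalRing.maximalIdeal R ∧
      Submodule.annihilator (Ideal.span {a}) = Ideal.span {a} := by
  constructor
  · intro I J
    by_cases hIJ : I ≤ J
    · exact Or.inl hIJ
    · right
      rw [SetLike.not_le_iff_exists] at hIJ
      obtain ⟨a, haI, haJ⟩ := hIJ
      intro b hb
      rcases span_comparable h a b with hab | hab
      · exact absurd ((Ideal.span_singleton_le_iff_mem J).mp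
          (hab.trans ((Ideal.span_singleton_le_iff_mem J).mpr hb))) haJ
      · exact (Ideal.span_singleton_le_iff_mem I).mp
          (hab.trans ((Ideal.span_singleton_le_iff_mem I).mpr haI))
  · intro a ha haP
    have hann := ann_eq h a ha haP
    constructor
    · apply le_antisymm ((Ideal.span_singleton_le_iff_mem _).mpr haP)
      intro b hb
      rcases eq_or_ne b 0 with rfl | hb0
      · exact Ideal.zero_mem _
      rcases span_comparable h b a with hab | hab
      · exact hab (Ideal.mem_span_singleton_self b)
      · obtain ⟨t, ht⟩ := Ideal.mem_span_singleton.mp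
          (hab (Ideal.mem_span_singleton_self a))
        have hbb : b * b = 0 := (ann_eq h b hb0 hb b).mpr (Ideal.mem_span_singleton_self b)
        have hba : b * a = 0 := by
          calc b * a = b * b * t := by rw [ht]; ring
          _ = 0 := by rw [hbb, zero_mul]
        exact (hann b).mp hba
    · ext x
      rw [Submodule.mem_annihilator]
      constructor
      · intro hx
        exact (hann x).mp (by simpa using hx a (Ideal.mem_span_singleton_self a))
      · intro hx n hn
        obtain ⟨c, rfl⟩ := Ideal.mem_span_singleton.mp hn
        have hxa : x * a = 0 := (hann x).mpr hx
        calc x • (a * c) = x * a * c := by rw [smul_eq_mul]; ring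
        _ = 0 := by rw [hxa, zero_mul]

end Aux

/-- If `R` is local and every finitely presented cyclic `R`-module `M` admits an exact
sequence `0 → M → F → M → 0` with `F` finite free, then `R` is a valuation ring
(its ideals are totally ordered) and every nonzero `a` in the maximal ideal `P`
satisfies `Ra = P` and `(0 : a) = Ra`. -/
theorem stmt_2 {R : Type*} [CommRing R] [IsLocalRing R]
    (h : ∀ I : Ideal R, I.FG →
      ∃ (n : ℕ) (f : (R ⧸ I) →ₗ[R] (Fin n → R)) (g : (Fin n → R) →ₗ[R] (R ⧸ I)),
        Function.Injective f ∧ Function.Surjective g ∧ LinearMap.ker g = LinearMap.range f) :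
    (∀ I J : Ideal R, I ≤ J ∨ J ≤ I) ∧
    ∀ a : R, a ≠ 0 → a ∈ IsLocalRing.maximalIdeal R →
      Ideal.span {a} = IsLocalRing.maximalIdeal R ∧
      Submodule.annihilator (Ideal.span {a}) = Ideal.span {a} := by
  exact final_stmt h
end

section
/- Let R be a commutative ring such that for every maximal ideal P, the maximal ideal of the localization R_P is either zero or a simple R_P-module. Then for every ideal I of R, the ideal I² is a pure ideal of R, i.e., R/I² is a flat R-module. -/
open IsLocalRing

/-- In a local ring whose maximal ideal is zero or simple, the square of the
maximal ideal is zero. -/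
lemma aux_sq_eq_bot {S : Type*} [CommRing S] [IsLocalRing S]
    (h : maximalIdeal S = ⊥ ∨ IsSimpleModule S (maximalIdeal S)) :
    (maximalIdeal S) ^ 2 = ⊥ := by
  rcases h with h | h
  · rw [h, pow_two, Ideal.bot_mul]
  · have hatom : IsAtom (maximalIdeal S) := IsSimpleModule.isAtom
    have hle : (maximalIdeal S) ^ 2 ≤ maximalIdeal S := by
      rw [pow_two]; exact Ideal.mul_le_right
    rcases hle.lt_or_eq with hlt | heq
    · exact hatom.2 _ hlt
    · -- maximal ideal is f.g. (it is an atom, so principal)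
      have hne : maximalIdeal S ≠ ⊥ := hatom.1
      obtain ⟨t, htm, ht0⟩ : ∃ t ∈ maximalIdeal S, t ≠ 0 := by
        by_contra hc
        push_neg at hc
        exact hne (le_bot_iff.mp fun y hy => (Ideal.mem_bot).mpr (hc y hy))
      have hspan : Ideal.span {t} = maximalIdeal S := by
        have hle' : Ideal.span {t} ≤ maximalIdeal S := by
          rw [Ideal.span_le, Set.singleton_subset_iff]; exact htm
        rcases hle'.lt_or_eq with hlt' | he'
        · exact absurd (hatom.2 _ hlt') (by
            simp [Ideal.span_singleton_eq_bot, ht0])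
        · exact he'
      have hfg : (maximalIdeal S).FG := ⟨{t}, by simpa using hspan⟩
      have := Submodule.eq_bot_of_le_smul_of_le_jacobson_bot (maximalIdeal S)
        (maximalIdeal S) hfg
        (by rw [Ideal.smul_eq_mul, ← pow_two, heq])
        (le_of_eq (IsLocalRing.jacobson_eq_maximalIdeal ⊥ bot_ne_top).symm)
      rw [this, pow_two, Ideal.bot_mul]

/-- Key pointwise purity property of `I ^ 2`. -/
lemma aux_key {R : Type*} [CommRing R]
    (h : ∀ (P : Ideal R) [P.IsMaximal],
      IsLocalRing.maximalIdeal (Localization.AtPrime P) = ⊥ ∨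
      IsSimpleModule (Localization.AtPrime P)
        (IsLocalRing.maximalIdeal (Localization.AtPrime P)))
    (I : Ideal R) {x : R} (hx : x ∈ I ^ 2) :
    ∃ e ∈ I ^ 2, x * e = x := by
  set C : Ideal R := (Ideal.span {x} * I ^ 2).colon (Ideal.span {x}) with hC
  have hCtop : C = ⊤ := by
    by_contra hCne
    obtain ⟨P, hPmax, hCP⟩ := Ideal.exists_le_maximal _ hCne
    haveI := hPmax
    by_cases hIP : I ≤ P
    · -- localize at P : x maps to zero there
      set L := Localization.AtPrime P
      have hm2 : (maximalIdeal L) ^ 2 = ⊥ := aux_sq_eq_bot (h P)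
      have hmapI : Ideal.map (algebraMap R L) I ≤ maximalIdeal L := by
        rw [Ideal.map_le_iff_le_comap]
        rw [← Ideal.under_def, Localization.AtPrime.comap_maximalIdeal]
        exact hIP
      have hmap : Ideal.map (algebraMap R L) (I ^ 2) ≤ (maximalIdeal L) ^ 2 := by
        rw [Ideal.map_pow]
        exact Ideal.pow_right_mono hmapI 2
      have hx0 : algebraMap R L x = 0 := by
        have := hmap (Ideal.mem_map_of_mem _ hx)
        rwa [hm2, Ideal.mem_bot] at this
      obtain ⟨s, hs⟩ := (IsLocalization.map_eq_zero_iff P.primeCompl L x).mp hx0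
      have hsC : (s : R) ∈ C := by
        rw [hC, Ideal.mem_colon_span_singleton]
        have : (s : R) * x = 0 := by simpa [mul_comm] using hs
        rw [this]
        exact (Ideal.span {x} * I ^ 2).zero_mem
      exact s.2 (hCP hsC)
    · obtain ⟨a, haI, haP⟩ := SetLike.not_le_iff_exists.mp hIP
      have ha2 : a ^ 2 ∈ I ^ 2 := Ideal.pow_mem_pow haI 2
      have haC : a ^ 2 ∈ C := by
        rw [hC, Ideal.mem_colon_span_singleton]
        exact Ideal.mem_span_singleton_mul.mpr ⟨a ^ 2, ha2, (mul_comm _ _)⟩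
      exact haP (hPmax.isPrime.mem_of_pow_mem 2 (hCP haC))
  have h1 : (1 : R) ∈ C := by rw [hCtop]; trivial
  rw [hC, Ideal.mem_colon_span_singleton, one_mul] at h1
  obtain ⟨e, he, hxe⟩ := Ideal.mem_span_singleton_mul.mp h1
  exact ⟨e, he, hxe⟩

/-- `r • 1 = mk r` in a quotient ring. -/
lemma aux_smul_one {R : Type*} [CommRing R] (J : Ideal R) (r : R) :
    r • (1 : R ⧸ J) = Ideal.Quotient.mk J r := by
  rw [← Algebra.algebraMap_eq_smul_one, Ideal.Quotient.algebraMap_eq]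

/-- A pure ideal (in the pointwise sense) has flat quotient. -/
lemma aux_flat {R : Type*} [CommRing R] (J : Ideal R)
    (hJ : ∀ x ∈ J, ∃ e ∈ J, x * e = x) : Module.Flat R (R ⧸ J) := by
  rw [Module.Flat.iff_rTensor_injective']
  intro K
  rw [injective_iff_map_eq_zero]
  intro z hz
  obtain ⟨y, rfl⟩ : ∃ y : K, z = y ⊗ₜ[R] (1 : R ⧸ J) := by
    clear hz
    induction z using TensorProduct.induction_on with
    | zero => exact ⟨0, by simp⟩
    | tmul a m =>
      obtain ⟨r, rfl⟩ := Ideal.Quotient.mk_surjective m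
      refine ⟨r • a, ?_⟩
      have h1 : (Ideal.Quotient.mk J) r = r • (1 : R ⧸ J) :=
        (aux_smul_one J r).symm
      rw [h1, ← TensorProduct.smul_tmul]
    | add u v hu hv =>
      obtain ⟨yu, rfl⟩ := hu
      obtain ⟨yv, rfl⟩ := hv
      exact ⟨yu + yv, (TensorProduct.add_tmul _ _ _).symm⟩
  have hy : (y : R) ∈ J := by
    have h0 : (y : R) ⊗ₜ[R] (1 : R ⧸ J) = (0 : TensorProduct R R (R ⧸ J)) := by
      simpa using hz
    have := congrArg (TensorProduct.lid R (R ⧸ J)) h0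
    simp only [TensorProduct.lid_tmul, map_zero, smul_eq_mul] at this
    rw [← Ideal.Quotient.eq_zero_iff_mem]
    rw [(aux_smul_one J (y : R)).symm]
    exact this
  obtain ⟨e, heJ, hye⟩ := hJ _ hy
  have h1e : (1 : R ⧸ J) = Ideal.Quotient.mk J (1 - e) := by
    rw [map_sub, map_one, Ideal.Quotient.eq_zero_iff_mem.mpr heJ, sub_zero]
  have hmk : Ideal.Quotient.mk J (1 - e) = (1 - e) • (1 : R ⧸ J) :=
    (aux_smul_one J (1 - e)).symm
  have hz0 : (1 - e) • y = (0 : K) := by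
    ext
    simp only [SetLike.val_smul, smul_eq_mul, ZeroMemClass.coe_zero, sub_mul, one_mul]
    rw [mul_comm, hye, sub_self]
  rw [h1e, hmk, TensorProduct.tmul_smul, TensorProduct.smul_tmul', hz0,
    TensorProduct.zero_tmul]

/-- If for every maximal ideal `P` of `R` the maximal ideal of `R_P` is zero or simple,
then `I²` is a pure ideal for every ideal `I`, i.e. `R/I²` is flat. -/
theorem stmt_4 {R : Type*} [CommRing R]
    (h : ∀ (P : Ideal R) [P.IsMaximal],
      IsLocalRing.maximalIdeal (Localization.AtPrime P) = ⊥ ∨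
      IsSimpleModule (Localization.AtPrime P)
        (IsLocalRing.maximalIdeal (Localization.AtPrime P))) :
    ∀ I : Ideal R, Module.Flat R (R ⧸ (I ^ 2)) := by
  intro I
  exact aux_flat _ (fun x hx => aux_key h I hx)
end

section
/- Let A be a von Neumann regular commutative ring and let E be an A-module such that for every maximal ideal P of A, the localization E_P is an A_P-vector space of dimension at most 1. Let 0 ≠ x ∈ E and let ε be the idempotent of A with (0 :_A x) = A(1 − ε). Then εE = Ax. -/
/-- Localizations of a von Neumann regular commutative ring at primes are fields. -/
lemma loc_isField {A : Type*} [CommRing A] (hreg : ∀ a : A, ∃ b : A, a = a * b * a)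
    (P : Ideal A) [P.IsPrime] : IsField (Localization.AtPrime P) := by
  refine ⟨exists_pair_ne _, mul_comm, ?_⟩
  intro z hz
  obtain ⟨r, s, rfl⟩ : ∃ r s, IsLocalization.mk' (Localization.AtPrime P) r s = z := by
    obtain ⟨⟨r, s⟩, h⟩ := IsLocalization.mk'_surjective P.primeCompl z; exact ⟨r, s, h⟩
  set L := Localization.AtPrime P
  obtain ⟨b, hb⟩ := hreg r
  set u := algebraMap A L r with hu
  set v := algebraMap A L b with hv
  have huv : u * (1 - v * u) = 0 := by
    have : u = u * v * u := by rw [hu, hv, ← map_mul, ← map_mul, ← hb]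
    calc u * (1 - v * u) = u - u * v * u := by ring
    _ = 0 := by rw [← this, sub_self]
  have hunit : IsUnit u := by
    rcases IsLocalRing.isUnit_or_isUnit_one_sub_self (v * u) with h | h
    · exact isUnit_of_mul_isUnit_right h
    · exfalso
      apply hz
      have hu0 : u = 0 := by
        obtain ⟨w, hw⟩ := h.exists_right_inv
        calc u = u * ((1 - v * u) * w) := by rw [hw, mul_one]
        _ = (u * (1 - v * u)) * w := by ring
        _ = 0 := by rw [huv, zero_mul]
      rw [IsLocalization.mk'_eq_mul_mk'_one, ← hu, hu0, zero_mul]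
  have hmk : IsUnit (IsLocalization.mk' L (1:A) s) := by
    refine IsUnit.of_mul_eq_one (algebraMap A L s) ?_
    rw [IsLocalization.mk'_spec, map_one]
  obtain ⟨w, hw⟩ := (hunit.mul hmk).exists_right_inv
  exact ⟨w, by rwa [IsLocalization.mk'_eq_mul_mk'_one, ← hu]⟩

/-- Let `A` be von Neumann regular and `E` an `A`-module whose localization at every
maximal ideal is a vector space of rank at most `1`.  If `0 ≠ x ∈ E` and `ε` is the
idempotent with `(0 : x) = A(1 − ε)`, then `εE = Ax`. -/
theorem stmt_6 {A : Type*} [CommRing A] (hreg : ∀ a : A, ∃ b : A, a = a * b * a)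
    {E : Type*} [AddCommGroup E] [Module A E]
    (hrk : ∀ (P : Ideal A) [P.IsMaximal],
      Module.rank (Localization.AtPrime P) (LocalizedModule P.primeCompl E) ≤ 1)
    (x : E) (hx : x ≠ 0) (ε : A) (hε : IsIdempotentElem ε)
    (hann : (Submodule.span A ({x} : Set E)).annihilator = Ideal.span {1 - ε}) :
    (Ideal.span ({ε} : Set A)) • (⊤ : Submodule A E) = Submodule.span A ({x} : Set E) := by
  have hann' : ∀ a : A, a • x = 0 ↔ a ∈ Ideal.span {1 - ε} := by
    intro a
    rw [← hann, Submodule.mem_annihilator_span_singleton]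
  have hεx : ε • x = x := by
    have h0 : (1 - ε) • x = 0 := (hann' _).mpr (Ideal.subset_span rfl)
    rw [sub_smul, one_smul, sub_eq_zero] at h0
    exact h0.symm
  -- key claim : ε • y ∈ span {x} for all y
  have key : ∀ y : E, ε • y ∈ Submodule.span A ({x} : Set E) := by
    intro y
    set I : Ideal A := (Submodule.span A ({x} : Set E)).comap
      (LinearMap.toSpanSingleton A E (ε • y)) with hI
    have hmem : ∀ a : A, a ∈ I ↔ a • (ε • y) ∈ Submodule.span A ({x} : Set E) := fun a => Iff.rfl
    have hItop : I = ⊤ := by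
      by_contra hne
      obtain ⟨P, hPmax, hIP⟩ := Ideal.exists_le_maximal I hne
      by_cases hεP : ε ∈ P
      · -- 1 - ε ∈ I, but 1 - ε ∉ P
        have h1 : (1 - ε) ∈ I := by
          rw [hmem]
          have : (1 - ε) • ε • y = (0:E) := by
            rw [smul_smul, sub_mul, one_mul, hε.eq, sub_self, zero_smul]
          rw [this]; exact Submodule.zero_mem _
        have : (1:A) ∈ P := by simpa using P.add_mem (hIP h1) hεP
        exact hPmax.ne_top (Ideal.eq_top_of_isUnit_mem _ this isUnit_one)
      · -- localize at P
        haveI := hPmax.isPrime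
        letI : Field (Localization.AtPrime P) := (loc_isField hreg P).toField
        set f := LocalizedModule.mkLinearMap P.primeCompl E with hf
        have h1εP : (1 - ε) ∈ P := by
          have h0 : ε * (1 - ε) = 0 := by
            rw [mul_sub, mul_one, hε.eq, sub_self]
          rcases hPmax.isPrime.mem_or_mem (h0 ▸ P.zero_mem) with h | h
          · exact absurd h hεP
          · exact h
        have hspanP : Ideal.span {1 - ε} ≤ P := by
          rw [Ideal.span_le, Set.singleton_subset_iff]; exact h1εP
        -- pull back zero elements of the localized module
        have pull : ∀ z : E, f z = 0 → ∃ u : P.primeCompl, (u : A) • z = 0 := by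
          intro z h0
          rw [hf, LocalizedModule.mkLinearMap_apply] at h0
          have hmk : LocalizedModule.mk z (1 : P.primeCompl) = LocalizedModule.mk 0 1 :=
            h0.trans (LocalizedModule.zero_mk 1).symm
          obtain ⟨u, hu⟩ := LocalizedModule.mk_eq.mp hmk
          refine ⟨u, ?_⟩
          simpa [Submonoid.smul_def] using hu
        have hfx : f x ≠ 0 := by
          intro h0
          obtain ⟨u, hu⟩ := pull x h0
          exact u.2 (hspanP ((hann' _).mp hu))
        haveI : Module.Free (Localization.AtPrime P) (LocalizedModule P.primeCompl E) :=
          Module.Free.of_divisionRing (Localization.AtPrime P) (LocalizedModule P.primeCompl E)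
        obtain ⟨v₀, hv₀⟩ := rank_le_one_iff.mp (hrk P)
        obtain ⟨r, hr⟩ := hv₀ (f x)
        have hr0 : r ≠ 0 := by
          rintro rfl
          rw [zero_smul] at hr
          exact hfx hr.symm
        obtain ⟨c, hc⟩ := hv₀ (f (ε • y))
        have hxy : f (ε • y) = (c * r⁻¹) • f x := by
          have hinv : r⁻¹ * r = 1 := inv_mul_cancel₀ hr0
          rw [← hr, ← hc, smul_smul, mul_assoc, hinv, mul_one]
        obtain ⟨num, den, hd⟩ : ∃ num den, IsLocalization.mk' (Localization.AtPrime P) num den = c * r⁻¹ := by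
          obtain ⟨⟨n, d⟩, h⟩ := IsLocalization.mk'_surjective P.primeCompl (c * r⁻¹); exact ⟨n, d, h⟩
        have h2 : ((den : A)) • f (ε • y) = num • f x := by
          rw [hxy, ← algebraMap_smul (Localization.AtPrime P) (den : A), smul_smul, ← hd,
            IsLocalization.mk'_spec', algebraMap_smul]
        have e1 : f ((den : A) • (ε • y)) = (den : A) • f (ε • y) := f.map_smul _ _
        have e2 : f (num • x) = num • f x := f.map_smul _ _
        have h2' : f ((den : A) • (ε • y) - num • x) = 0 := by
          rw [map_sub, e1, e2, h2, sub_self]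
        obtain ⟨u, hu⟩ := pull _ h2'
        have hu' : ((u : A) * (den : A)) • (ε • y) = ((u : A) * num) • x := by
          rw [smul_sub, sub_eq_zero] at hu
          rw [mul_smul, mul_smul]
          exact hu
        have haI : (u : A) * (den : A) ∈ I := by
          rw [hmem, hu']
          exact Submodule.smul_mem _ _ (Submodule.mem_span_singleton_self x)
        exact (mul_mem u.2 den.2 : (u : A) * (den : A) ∈ P.primeCompl) (hIP haI)
    have h1 : (1 : A) ∈ I := hItop ▸ Submodule.mem_top
    simpa using (hmem 1).mp h1
  apply le_antisymm
  · rw [Submodule.smul_le]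
    intro a ha y _
    obtain ⟨c, rfl⟩ := Ideal.mem_span_singleton'.mp ha
    rw [mul_smul]
    exact Submodule.smul_mem _ _ (key y)
  · rw [Submodule.span_le, Set.singleton_subset_iff]
    have : x = ε • x := hεx.symm
    rw [this]
    exact Submodule.smul_mem_smul (Ideal.subset_span rfl) Submodule.mem_top
end

section
/- Let A be a commutative von Neumann regular ring and R = A ⋉ A the trivial extension of A by itself. For an R-module structure given by a pair (U, f) where U is an A-module and f : U → U is an A-linear map with f² = 0 (the action of (0,1) being f), the module U is flat over R if and only if ker(f) = im(f). -/
/-!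
In a von Neumann regular ring every finitely generated ideal is idempotent, hence generated by an
idempotent. It follows that every finitely generated ideal of `R = A ⋉ A` has the form
`{(x, y) | x ∈ eA, y ∈ (e + k)A} = R (e, k)` for orthogonal idempotents `e, k`, so `R` is Bézout
and flatness of `U` means: `r u = 0` implies `u ∈ (0 : r) U`. For `r = (0, 1)` this is
`ker f ⊆ im f`. Conversely, if `ker f = im f` and `(e, k) u = e u + k f u = 0`, then `e u = 0` and
`f (k u) = 0`, so `k u = f w`, and `u = (1 - e - k) u + (0, k) w` with both coefficients in
`(0 : (e, k))`.
-/

open TrivSqZeroExt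

/-- The ring homomorphism `A ⋉ A → End_A U` sending `(a,b)` to `a•id + b•f`, for an
`A`-endomorphism `f` of `U` with `f² = 0`. -/
def pairRingHom {A : Type*} [CommRing A] {U : Type*} [AddCommGroup U] [Module A U]
    (f : U →ₗ[A] U) (hf : f ∘ₗ f = 0) :
    TrivSqZeroExt A A →+* Module.End A U where
  toFun r := r.fst • (LinearMap.id : U →ₗ[A] U) + r.snd • f
  map_one' := by simp [Module.End.one_eq_id]
  map_mul' r s := by
    ext u
    have hffu : f (f u) = 0 := by
      have := DFunLike.congr_fun hf u
      simpa using this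
    simp only [fst_mul, snd_mul, Module.End.mul_apply, LinearMap.add_apply,
      LinearMap.smul_apply, LinearMap.id_apply, map_add, map_smul, smul_eq_mul,
      MulOpposite.smul_eq_mul_unop, MulOpposite.unop_op, hffu, smul_zero]
    module
  map_zero' := by simp
  map_add' r s := by
    ext u
    simp only [fst_add, snd_add, LinearMap.add_apply, LinearMap.smul_apply,
      LinearMap.id_apply, add_smul]
    module

/-- The `A ⋉ A`-module structure on `U` attached to a pair `(U, f)` with `f² = 0`:
`(a,b) • u = a • u + b • f u`. -/
def pairModule {A : Type*} [CommRing A] {U : Type*} [AddCommGroup U] [Module A U]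
    (f : U →ₗ[A] U) (hf : f ∘ₗ f = 0) : Module (TrivSqZeroExt A A) U :=
  Module.compHom U (pairRingHom f hf)

open TensorProduct

namespace Module.Flat

variable {R M : Type*} [CommRing R] [AddCommGroup M] [Module R M]

theorem mem_annihilator_smul_top_of_smul_eq_zero [Flat R M] {r : R} {m : M} (h : r • m = 0) :
    m ∈ (Ideal.span {r}).annihilator • (⊤ : Submodule R M) := by
  obtain ⟨k, a, y, hm, ha⟩ :=
    isTrivialRelation_of_sum_smul_eq_zero (f := fun _ : Unit ↦ r) (x := fun _ ↦ m) (by simpa)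
  rw [show m = _ from hm ()]
  refine Submodule.sum_mem _ fun j _ ↦ Submodule.smul_mem_smul ?_ Submodule.mem_top
  simpa [Submodule.mem_annihilator_span_singleton, mul_comm] using ha j

theorem exists_tmul_eq_of_span_singleton (r : R) (x : Ideal.span {r} ⊗[R] M) :
    ∃ m : M, x = ⟨r, Ideal.mem_span_singleton_self r⟩ ⊗ₜ m := by
  induction x using TensorProduct.induction_on with
  | zero => exact ⟨0, (tmul_zero _ _).symm⟩
  | tmul s m =>
    obtain ⟨c, hc⟩ := Ideal.mem_span_singleton'.mp s.2
    exact ⟨c • m, by rw [← smul_tmul]; congr; ext; simp [hc]⟩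
  | add x y hx hy =>
    obtain ⟨m, rfl⟩ := hx
    obtain ⟨n, rfl⟩ := hy
    exact ⟨m + n, (tmul_add _ _ _).symm⟩

theorem lift_lsmul_span_singleton_injective {r : R}
    (h : ∀ m : M, r • m = 0 → m ∈ (Ideal.span {r}).annihilator • (⊤ : Submodule R M)) :
    Function.Injective (lift ((LinearMap.lsmul R M).comp (Ideal.span {r}).subtype)) := by
  refine (injective_iff_map_eq_zero _).mpr fun x hx ↦ ?_
  obtain ⟨m, rfl⟩ := exists_tmul_eq_of_span_singleton r x
  refine Submodule.smul_induction_on (h m (by simpa using hx)) (fun s hs n _ ↦ ?_)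
    (fun _ _ h₁ h₂ ↦ by rw [tmul_add, h₁, h₂, add_zero])
  have hs₀ : s • (⟨r, Ideal.mem_span_singleton_self r⟩ : Ideal.span {r}) = 0 := by
    ext
    simpa [Submodule.mem_annihilator_span_singleton] using hs
  rw [← smul_tmul, hs₀, zero_tmul]

theorem iff_forall_mem_annihilator_smul_top [IsBezout R] :
    Flat R M ↔ ∀ (r : R) (m : M), r • m = 0 →
      m ∈ (Ideal.span {r}).annihilator • (⊤ : Submodule R M) := by
  refine ⟨fun _ _ _ ↦ mem_annihilator_smul_top_of_smul_eq_zero, fun h ↦ ?_⟩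
  refine iff_lift_lsmul_comp_subtype_injective.mpr fun I hI ↦ ?_
  obtain ⟨r, rfl⟩ := (IsBezout.isPrincipal_of_FG I hI).principal
  exact lift_lsmul_span_singleton_injective (h r)

end Module.Flat

section

variable {A : Type*} [CommRing A]

theorem Ideal.exists_isIdempotentElem_eq_span_of_fg (hreg : ∀ a : A, ∃ b, a = a * b * a)
    {I : Ideal A} (hI : I.FG) : ∃ e, IsIdempotentElem e ∧ I = Ideal.span {e} := by
  refine (I.isIdempotentElem_iff_of_fg hI).mp (le_antisymm Ideal.mul_le_right fun a ha ↦ ?_)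
  obtain ⟨b, hb⟩ := hreg a
  rw [hb, mul_assoc]
  exact Ideal.mul_mem_mul ha (I.mul_mem_left b ha)

theorem IsIdempotentElem.mul_eq_left_of_mem_span {e g : A} (hg : IsIdempotentElem g)
    (he : e ∈ Ideal.span {g}) : e * g = e := by
  obtain ⟨t, rfl⟩ := Ideal.mem_span_singleton'.mp he
  rw [mul_assoc, hg.eq]

end

namespace TrivSqZeroExt

variable {A : Type*} [CommRing A]

def prodIdeal (I J : Ideal A) (hIJ : I ≤ J) : Ideal (TrivSqZeroExt A A) where
  carrier := {r | r.fst ∈ I ∧ r.snd ∈ J}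
  add_mem' hx hy := ⟨add_mem hx.1 hy.1, add_mem hx.2 hy.2⟩
  zero_mem' := ⟨zero_mem I, zero_mem J⟩
  smul_mem' c x hx := by
    refine ⟨I.mul_mem_left _ hx.1, ?_⟩
    simpa only [smul_eq_mul, DualNumber.snd_mul, mul_comm] using
      add_mem (J.mul_mem_left c.fst hx.2) (J.mul_mem_left c.snd (hIJ hx.1))

@[simp]
theorem mem_prodIdeal {I J : Ideal A} {hIJ : I ≤ J} {r : TrivSqZeroExt A A} :
    r ∈ prodIdeal I J hIJ ↔ r.fst ∈ I ∧ r.snd ∈ J := Iff.rfl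

theorem prodIdeal_sup {I₁ J₁ I₂ J₂ : Ideal A} (h₁ : I₁ ≤ J₁) (h₂ : I₂ ≤ J₂) :
    prodIdeal I₁ J₁ h₁ ⊔ prodIdeal I₂ J₂ h₂ =
      prodIdeal (I₁ ⊔ I₂) (J₁ ⊔ J₂) (sup_le_sup h₁ h₂) := by
  refine le_antisymm (sup_le ?_ ?_) fun r ⟨hI, hJ⟩ ↦ ?_
  · exact fun r hr ↦ ⟨Ideal.mem_sup_left hr.1, Ideal.mem_sup_left hr.2⟩
  · exact fun r hr ↦ ⟨Ideal.mem_sup_right hr.1, Ideal.mem_sup_right hr.2⟩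
  obtain ⟨x₁, hx₁, x₂, hx₂, hx⟩ := Submodule.mem_sup.mp hI
  obtain ⟨y₁, hy₁, y₂, hy₂, hy⟩ := Submodule.mem_sup.mp hJ
  have hr : r = (inl x₁ + inr y₁) + (inl x₂ + inr y₂) := by
    ext <;> simp [← hx, ← hy]
  rw [hr]
  exact Submodule.add_mem_sup (by simpa using ⟨hx₁, hy₁⟩) (by simpa using ⟨hx₂, hy₂⟩)

/-- If `a = a c a`, then `(x a, y a + z b) = (x a c + z (1 - a c), y + (z - x) c b) (a, b)`. -/
theorem span_singleton_eq_prodIdeal (hreg : ∀ a : A, ∃ b, a = a * b * a)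
    (r : TrivSqZeroExt A A) :
    Ideal.span {r} = prodIdeal (Ideal.span {r.fst}) (Ideal.span {r.fst, r.snd})
      (Ideal.span_mono (by simp)) := by
  refine le_antisymm (Ideal.span_le.mpr ?_) fun s ⟨hs₁, hs₂⟩ ↦ ?_
  · exact Set.singleton_subset_iff.mpr
      ⟨Ideal.mem_span_singleton_self _, Ideal.subset_span (by simp)⟩
  obtain ⟨c, hc⟩ := hreg r.fst
  obtain ⟨x, hx⟩ := Ideal.mem_span_singleton'.mp hs₁
  obtain ⟨y, z, hyz⟩ := Ideal.mem_span_pair.mp hs₂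
  refine Ideal.mem_span_singleton'.mpr
    ⟨inl (x * (r.fst * c) + z * (1 - r.fst * c)) + inr (y + (z - x) * c * r.snd), ?_⟩
  ext
  · simp only [fst_mul, fst_add, fst_inl, fst_inr, add_zero, ← hx]
    linear_combination (z - x) * hc
  · simp only [DualNumber.snd_mul, fst_add, snd_add, fst_inl, snd_inl, fst_inr, snd_inr, ← hyz]
    ring

theorem prodIdeal_span_eq_span_singleton {e g : A} (he : IsIdempotentElem e)
    (hg : IsIdempotentElem g) (h : Ideal.span {e} ≤ Ideal.span {g}) :
    prodIdeal (Ideal.span {e}) (Ideal.span {g}) h = Ideal.span {inl e + inr (g - e)} := by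
  have heg : e * g = e := hg.mul_eq_left_of_mem_span (h (Ideal.mem_span_singleton_self e))
  refine le_antisymm ?_ (Ideal.span_le.mpr ?_)
  · rintro s ⟨hs₁, hs₂⟩
    obtain ⟨x, hx⟩ := Ideal.mem_span_singleton'.mp hs₁
    obtain ⟨y, hy⟩ := Ideal.mem_span_singleton'.mp hs₂
    refine Ideal.mem_span_singleton'.mpr ⟨inl (x * e + y * (1 - e)) + inr y, ?_⟩
    ext
    · simp only [fst_mul, fst_add, fst_inl, fst_inr, add_zero, ← hx]
      linear_combination (x - y) * he.eq
    · simp only [DualNumber.snd_mul, fst_add, snd_add, fst_inl, snd_inl, fst_inr, snd_inr, ← hy]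
      linear_combination (x - y) * heg + (y - x) * he.eq
  · simpa using Ideal.mem_span_singleton'.mpr ⟨1 - e, by linear_combination -heg⟩

theorem exists_orthogonal_idempotents_span_eq_of_fg (hreg : ∀ a : A, ∃ b, a = a * b * a)
    {𝔞 : Ideal (TrivSqZeroExt A A)} (h𝔞 : 𝔞.FG) :
    ∃ e k : A, IsIdempotentElem e ∧ IsIdempotentElem k ∧ e * k = 0 ∧
      𝔞 = Ideal.span {inl e + inr k} := by
  obtain ⟨I, J, hIJ, hI, hJ, rfl⟩ : ∃ I J hIJ, I.FG ∧ J.FG ∧ 𝔞 = prodIdeal I J hIJ := by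
    induction 𝔞, h𝔞 using Submodule.fg_induction with
    | singleton r =>
      exact ⟨_, _, _, Submodule.fg_span_singleton _, Submodule.fg_span (Set.toFinite _),
        span_singleton_eq_prodIdeal hreg r⟩
    | sup _ _ _ _ h₁ h₂ =>
      obtain ⟨I₁, J₁, hIJ₁, hI₁, hJ₁, rfl⟩ := h₁
      obtain ⟨I₂, J₂, hIJ₂, hI₂, hJ₂, rfl⟩ := h₂
      exact ⟨_, _, _, Submodule.FG.sup hI₁ hI₂, Submodule.FG.sup hJ₁ hJ₂, prodIdeal_sup hIJ₁ hIJ₂⟩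
  obtain ⟨e, he, rfl⟩ := Ideal.exists_isIdempotentElem_eq_span_of_fg hreg hI
  obtain ⟨g, hg, rfl⟩ := Ideal.exists_isIdempotentElem_eq_span_of_fg hreg hJ
  have heg : e * g = e := hg.mul_eq_left_of_mem_span (hIJ (Ideal.mem_span_singleton_self e))
  exact ⟨e, g - e, he, by unfold IsIdempotentElem; linear_combination hg.eq + he.eq - 2 * heg,
    by linear_combination heg - he.eq, prodIdeal_span_eq_span_singleton he hg hIJ⟩

theorem isBezout_of_regular (hreg : ∀ a : A, ∃ b, a = a * b * a) :
    IsBezout (TrivSqZeroExt A A) :=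
  ⟨fun _ h𝔞 ↦
    let ⟨_, _, _, _, _, h⟩ := exists_orthogonal_idempotents_span_eq_of_fg hreg h𝔞
    ⟨_, h⟩⟩

section PairModule

variable {U : Type*} [AddCommGroup U] [Module A U] [Module (TrivSqZeroExt A A) U]
  {f : U →ₗ[A] U} (hsmul : ∀ (r : TrivSqZeroExt A A) (u : U), r • u = r.fst • u + r.snd • f u)
include hsmul

theorem apply_apply_eq_zero_of_smul_eq (u : U) : f (f u) = 0 := by
  have h (v : U) : (inr 1 : TrivSqZeroExt A A) • v = f v := by simp [hsmul]
  rw [← h, ← h, smul_smul, inr_mul_inr, zero_smul]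

theorem mem_annihilator_smul_top_of_ker_le_range (hker : LinearMap.ker f ≤ LinearMap.range f)
    {e k : A} (he : IsIdempotentElem e) (hk : IsIdempotentElem k) (hek : e * k = 0) {u : U}
    (hu : (inl e + inr k : TrivSqZeroExt A A) • u = 0) :
    u ∈ (Ideal.span {inl e + inr k}).annihilator • (⊤ : Submodule (TrivSqZeroExt A A) U) := by
  rw [hsmul] at hu
  simp only [fst_add, snd_add, fst_inl, snd_inl, fst_inr, snd_inr, add_zero] at hu
  have heu : e • u = 0 := by
    simpa [smul_smul, he.eq, hek] using congrArg (e • ·) hu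
  obtain ⟨w, hw⟩ : k • u ∈ LinearMap.range f := hker (by simpa [heu] using hu)
  have hu_eq : u = (inl (1 - e - k) : TrivSqZeroExt A A) • u + (inr k : TrivSqZeroExt A A) • w := by
    simp [hsmul, hw, sub_smul, heu, smul_smul, hk.eq]
  have h₁ : (inl (1 - e - k) : TrivSqZeroExt A A) * (inl e + inr k) = 0 := by
    ext <;> simp only [fst_mul, DualNumber.snd_mul, fst_add, snd_add, fst_inl, snd_inl,
      fst_inr, snd_inr, fst_zero, snd_zero]
    · linear_combination -he.eq - hek
    · linear_combination -hk.eq - hek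
  have h₂ : (inr k : TrivSqZeroExt A A) * (inl e + inr k) = 0 := by
    ext <;> simp only [fst_mul, DualNumber.snd_mul, fst_add, snd_add, fst_inl, snd_inl,
      fst_inr, snd_inr, fst_zero, snd_zero]
    · ring
    · linear_combination hek
  rw [hu_eq]
  exact add_mem
    (Submodule.smul_mem_smul ((Submodule.mem_annihilator_span_singleton _ _).mpr h₁) trivial)
    (Submodule.smul_mem_smul ((Submodule.mem_annihilator_span_singleton _ _).mpr h₂) trivial)

theorem forall_mem_annihilator_smul_top_iff (hreg : ∀ a : A, ∃ b, a = a * b * a) :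
    (∀ (r : TrivSqZeroExt A A) (u : U), r • u = 0 →
      u ∈ (Ideal.span {r}).annihilator • (⊤ : Submodule (TrivSqZeroExt A A) U)) ↔
      LinearMap.ker f = LinearMap.range f := by
  refine ⟨fun h ↦ le_antisymm (fun u hu ↦ ?_) ?_, fun hker r u hu ↦ ?_⟩
  · have hu' : (inr 1 : TrivSqZeroExt A A) • u = 0 := by simpa [hsmul] using hu
    refine Submodule.smul_induction_on (p := (· ∈ LinearMap.range f)) (h _ u hu')
      (fun s hs n _ ↦ ⟨s.snd • n, ?_⟩) (fun _ _ ↦ add_mem)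
    rw [Submodule.mem_annihilator_span_singleton, smul_eq_mul] at hs
    have hs₁ : s.fst = 0 := by simpa using congrArg snd hs
    simp [hsmul, hs₁]
  · rintro _ ⟨v, rfl⟩
    exact apply_apply_eq_zero_of_smul_eq hsmul v
  · obtain ⟨e, k, he, hk, hek, hr⟩ :=
      exists_orthogonal_idempotents_span_eq_of_fg hreg (𝔞 := Ideal.span {r})
        (Submodule.fg_span_singleton r)
    obtain ⟨c, hc⟩ := Ideal.mem_span_singleton'.mp (hr.ge (Ideal.mem_span_singleton_self _))
    rw [hr]
    refine mem_annihilator_smul_top_of_ker_le_range hsmul hker.le he hk hek ?_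
    rw [← hc, mul_smul, hu, smul_zero]

end PairModule

end TrivSqZeroExt

/-- For `A` von Neumann regular and `R = A ⋉ A`, the `R`-module `(U, f)` is flat over `R`
if and only if `ker f = im f`. -/
theorem stmt_7 {A : Type*} [CommRing A] (hreg : ∀ a : A, ∃ b : A, a = a * b * a)
    {U : Type*} [AddCommGroup U] [Module A U] (f : U →ₗ[A] U) (hf : f ∘ₗ f = 0) :
    letI : Module (TrivSqZeroExt A A) U := pairModule f hf
    Module.Flat (TrivSqZeroExt A A) U ↔ LinearMap.ker f = LinearMap.range f := by
  let _ : Module (TrivSqZeroExt A A) U := pairModule f hf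
  have _ : IsBezout (TrivSqZeroExt A A) := isBezout_of_regular hreg
  exact Module.Flat.iff_forall_mem_annihilator_smul_top.trans
    (forall_mem_annihilator_smul_top_iff (fun _ _ ↦ rfl) hreg)
end

section
/- Let A be a commutative von Neumann regular ring of characteristic 2 and R = A ⋉ A its trivial self-extension. Then every R-module M fits into a short exact sequence 0 → M → G → M → 0 with G a flat R-module. Concretely, for an R-module (U, f) with f² = 0, setting G = U × U with structure map g(u,v) = (v,0), the maps β(u) = (u, f(u)) and α(u,v) = f(u) + v give an exact sequence 0 → (U,f) → (G,g) → (U,f) → 0 of R-modules, and (G,g) is flat. -/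
/-!
An `A`-linear map intertwining the square-zero endomorphisms is `A ⋉ A`-linear, so `β` and `α`
are morphisms; `α ∘ β = 2f = 0` and `ker α ⊆ range β` (as `v = -f u = f u`) both use `2 = 0`.
The module `(U × U, (u, v) ↦ (v, 0))` is the base change `(A ⋉ A) ⊗[A] U`, via
`(u, v) ↦ ε ⊗ u + 1 ⊗ v` with `ε = (0, 1)`, hence flat as soon as `U` is `A`-flat. Over a von
Neumann regular ring every ideal satisfies `I = I²`, so a finitely generated ideal is generated
by an idempotent, is a direct summand of `A`, and every module is flat.
-/

open TrivSqZeroExt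

open TensorProduct

section VonNeumannRegular

variable {A : Type*} [CommRing A]

theorem Ideal.isIdempotentElem_of_forall_eq_mul_mul (hreg : ∀ a : A, ∃ b : A, a = a * b * a)
    (I : Ideal A) : IsIdempotentElem I := by
  refine le_antisymm Ideal.mul_le_right fun x hx => ?_
  obtain ⟨b, hb⟩ := hreg x
  rw [hb]
  exact Ideal.mul_mem_mul (I.mul_mem_right b hx) hx

theorem Module.Flat.of_forall_eq_mul_mul (hreg : ∀ a : A, ∃ b : A, a = a * b * a)
    (M : Type*) [AddCommGroup M] [Module A M] : Module.Flat A M := by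
  refine Module.Flat.iff_rTensor_injective.mpr fun I hI => ?_
  obtain ⟨e, he, rfl⟩ := (I.isIdempotentElem_iff_of_fg hI).mp
    (I.isIdempotentElem_of_forall_eq_mul_mul hreg)
  let r : A →ₗ[A] A ∙ e := (LinearMap.mulRight A e).codRestrict _ fun a =>
    Submodule.mem_span_singleton.mpr ⟨a, rfl⟩
  have hr : r ∘ₗ (A ∙ e).subtype = LinearMap.id := by
    ext ⟨x, hx⟩
    obtain ⟨c, rfl⟩ := Submodule.mem_span_singleton.mp hx
    simp [r, mul_assoc, he.eq]
  refine LinearMap.injective_of_comp_eq_id _ (r.rTensor M) ?_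
  rw [← LinearMap.rTensor_comp, hr, LinearMap.rTensor_id]

end VonNeumannRegular

section PairModule

variable {A : Type*} [CommRing A] {U V : Type*} [AddCommGroup U] [Module A U]
  [AddCommGroup V] [Module A V]

theorem LinearMap.apply_apply_eq_zero_of_comp_self {f : U →ₗ[A] U} (hf : f ∘ₗ f = 0) (u : U) :
    f (f u) = 0 :=
  LinearMap.congr_fun hf u

theorem pairModule_smul (f : U →ₗ[A] U) (hf : f ∘ₗ f = 0) (r : TrivSqZeroExt A A) (u : U) :
    letI := pairModule f hf
    r • u = r.fst • u + r.snd • f u :=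
  rfl

def pairHom {f : U →ₗ[A] U} (hf : f ∘ₗ f = 0) {g : V →ₗ[A] V} (hg : g ∘ₗ g = 0)
    (φ : U →ₗ[A] V) (hφ : g ∘ₗ φ = φ ∘ₗ f) :
    letI := pairModule f hf
    letI := pairModule g hg
    U →ₗ[TrivSqZeroExt A A] V :=
  letI := pairModule f hf
  letI := pairModule g hg
  { φ with
    map_smul' := fun r u => by
      have hφu : g (φ u) = φ (f u) := LinearMap.congr_fun hφ u
      rw [RingHom.id_apply, pairModule_smul, pairModule_smul]
      simp [hφu] }

variable (A U) in
theorem shift_comp_shift :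
    ((LinearMap.snd A U U).prod 0 : U × U →ₗ[A] U × U) ∘ₗ (LinearMap.snd A U U).prod 0 = 0 := by
  ext <;> simp

theorem shiftModule_smul (r : TrivSqZeroExt A A) (p : U × U) :
    letI := pairModule _ (shift_comp_shift A U)
    r • p = (r.fst • p.1 + r.snd • p.2, r.fst • p.2) := by
  rw [pairModule_smul]
  simp [Prod.ext_iff]

section ShortExactSequence

variable {f : U →ₗ[A] U} (hf : f ∘ₗ f = 0)

def shiftModuleIncl :
    letI := pairModule f hf
    letI := pairModule _ (shift_comp_shift A U)
    U →ₗ[TrivSqZeroExt A A] U × U :=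
  pairHom hf (shift_comp_shift A U) (LinearMap.id.prod f) <| by
    ext u <;> simp [LinearMap.apply_apply_eq_zero_of_comp_self hf]

def shiftModuleProj :
    letI := pairModule _ (shift_comp_shift A U)
    letI := pairModule f hf
    U × U →ₗ[TrivSqZeroExt A A] U :=
  pairHom (shift_comp_shift A U) hf (f ∘ₗ LinearMap.fst A U U + LinearMap.snd A U U) <| by
    ext p <;> simp [LinearMap.apply_apply_eq_zero_of_comp_self hf]

theorem shiftModuleIncl_injective :
    letI := pairModule f hf
    letI := pairModule _ (shift_comp_shift A U)
    Function.Injective (shiftModuleIncl hf) :=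
  fun _ _ h => congrArg Prod.fst h

theorem shiftModuleProj_surjective :
    letI := pairModule _ (shift_comp_shift A U)
    letI := pairModule f hf
    Function.Surjective (shiftModuleProj hf) :=
  fun v => ⟨(0, v), show f 0 + v = v by simp⟩

theorem ker_shiftModuleProj (hchar : (2 : A) = 0) :
    letI := pairModule f hf
    letI := pairModule _ (shift_comp_shift A U)
    LinearMap.ker (shiftModuleProj hf) = LinearMap.range (shiftModuleIncl hf) := by
  let _ := pairModule f hf
  let _ := pairModule _ (shift_comp_shift A U)
  have hadd_self : ∀ u : U, u + u = 0 := fun u => by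
    rw [← two_smul A u, hchar, zero_smul]
  refine Submodule.ext fun p => ⟨fun (hp : f p.1 + p.2 = 0) => ⟨p.1, Prod.ext rfl ?_⟩, ?_⟩
  · calc f p.1 = -f p.1 := (neg_eq_of_add_eq_zero_right (hadd_self _)).symm
      _ = p.2 := neg_eq_of_add_eq_zero_right hp
  · rintro ⟨u, rfl⟩
    exact hadd_self (f u)

end ShortExactSequence

variable (A U) in
def baseChangeEquivProd : TrivSqZeroExt A A ⊗[A] U ≃ₗ[A] U × U :=
  (prodLeft A A A A U : TrivSqZeroExt A A ⊗[A] U ≃ₗ[A] _) ≪≫ₗ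
    (TensorProduct.lid A U).prodCongr (TensorProduct.lid A U)

@[simp]
theorem baseChangeEquivProd_tmul (s : TrivSqZeroExt A A) (u : U) :
    baseChangeEquivProd A U (s ⊗ₜ u) = (s.fst • u, s.snd • u) :=
  rfl

variable (A U) in
noncomputable def shiftModuleEquivBaseChange :
    letI := pairModule _ (shift_comp_shift A U)
    (U × U) ≃ₗ[TrivSqZeroExt A A] TrivSqZeroExt A A ⊗[A] U :=
  letI := pairModule _ (shift_comp_shift A U)
  have hswap : ∀ p : U × U, baseChangeEquivProd A U (inr 1 ⊗ₜ p.1 + 1 ⊗ₜ p.2) = p.swap := by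
    intro p
    simp [Prod.ext_iff]
  LinearEquiv.ofBijective
    { toFun := fun p => inr 1 ⊗ₜ p.1 + 1 ⊗ₜ p.2
      map_add' := fun p q => by
        simp only [Prod.fst_add, Prod.snd_add, tmul_add]
        abel
      map_smul' := fun r p => (baseChangeEquivProd A U).injective <| by
        rw [RingHom.id_apply, hswap, shiftModule_smul, smul_add, smul_tmul', smul_tmul']
        simp [add_comm] }
    (by
      rw [← (baseChangeEquivProd A U).comp_bijective]
      convert Prod.swap_bijective
      exact funext hswap)

theorem flat_shiftModule [Module.Flat A U] :
    letI := pairModule _ (shift_comp_shift A U)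
    Module.Flat (TrivSqZeroExt A A) (U × U) :=
  letI := pairModule _ (shift_comp_shift A U)
  Module.Flat.of_linearEquiv (shiftModuleEquivBaseChange A U)

end PairModule

/-- Over a von Neumann regular ring `A` of characteristic `2` and `R = A ⋉ A`, every
`R`-module `(U, f)` fits in an exact sequence `0 → (U,f) → (G,g) → (U,f) → 0` with
`G = U × U`, `g(u,v) = (v,0)`, `β u = (u, f u)`, `α (u,v) = f u + v`, and `(G,g)` flat. -/
theorem stmt_8 {A : Type*} [CommRing A] (hreg : ∀ a : A, ∃ b : A, a = a * b * a)
    (hchar : (2 : A) = 0)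
    {U : Type*} [AddCommGroup U] [Module A U] (f : U →ₗ[A] U) (hf : f ∘ₗ f = 0) :
    letI : Module (TrivSqZeroExt A A) U := pairModule f hf
    letI : Module (TrivSqZeroExt A A) (U × U) :=
      pairModule ((LinearMap.snd A U U).prod 0) (by ext x <;> simp)
    ∃ (β : U →ₗ[TrivSqZeroExt A A] (U × U)) (α : (U × U) →ₗ[TrivSqZeroExt A A] U),
      (∀ u : U, β u = (u, f u)) ∧ (∀ p : U × U, α p = f p.1 + p.2) ∧
      Function.Injective β ∧ Function.Surjective α ∧
      LinearMap.ker α = LinearMap.range β ∧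
      Module.Flat (TrivSqZeroExt A A) (U × U) := by
  have := Module.Flat.of_forall_eq_mul_mul hreg U
  exact ⟨shiftModuleIncl hf, shiftModuleProj hf, fun _ => rfl, fun _ => rfl,
    shiftModuleIncl_injective hf, shiftModuleProj_surjective hf, ker_shiftModuleProj hf hchar,
    flat_shiftModule⟩
end

section
/- Let R be a commutative ring, I an ideal, and R ⋈ I = {(r, r+a) | r ∈ R, a ∈ I} the amalgamated duplication of R along I, viewed as a subring of R × R. If R ⋈ I is self FP-injective, then I is a pure ideal of R and R is self FP-injective. -/
/-- The amalgamated duplication `R ⋈ I = {(r, r + a) | r ∈ R, a ∈ I}`, as a subring of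
`R × R`. -/
def amalgDup (R : Type*) [CommRing R] (I : Ideal R) : Subring (R × R) where
  carrier := {p | p.2 - p.1 ∈ I}
  mul_mem' := by
    intro p q hp hq
    have : p.2 * q.2 - p.1 * q.1 = p.2 * (q.2 - q.1) + q.1 * (p.2 - p.1) := by ring
    simpa [this] using I.add_mem (I.mul_mem_left _ hq) (I.mul_mem_left _ hp)
  one_mem' := by simp
  add_mem' := by
    intro p q hp hq
    have : p.2 + q.2 - (p.1 + q.1) = (p.2 - p.1) + (q.2 - q.1) := by ring
    simpa [this] using I.add_mem hp hq
  zero_mem' := by simp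
  neg_mem' := by
    intro p hp
    have : -p.2 - -p.1 = -(p.2 - p.1) := by ring
    simpa [this] using I.neg_mem hp

/-- A module `E` over `S` is FP-injective if every homomorphism from a finitely
generated submodule of a finite free module `Sⁿ` to `E` extends to `Sⁿ`; equivalently
`Ext¹_S(M, E) = 0` for every finitely presented `S`-module `M`. -/
def IsFPInjective (S : Type*) [CommRing S] (E : Type*) [AddCommGroup E] [Module S E] :
    Prop :=
  ∀ (n : ℕ) (N : Submodule S (Fin n → S)), N.FG →
    ∀ φ : N →ₗ[S] E, ∃ ψ : (Fin n → S) →ₗ[S] E, ∀ x : N, ψ x = φ x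

set_option maxHeartbeats 1000000 in
set_option synthInstance.maxHeartbeats 400000 in
private lemma mem_amalgDup {R : Type*} [CommRing R] {I : Ideal R} {p : R × R} :
    p ∈ amalgDup R I ↔ p.2 - p.1 ∈ I := Iff.rfl

set_option maxHeartbeats 1000000 in
set_option synthInstance.maxHeartbeats 400000 in
private lemma amalg_pure {R : Type*} [CommRing R] (I : Ideal R)
    (h : IsFPInjective (amalgDup R I) (amalgDup R I)) :
    ∀ a ∈ I, ∃ b ∈ I, a * b = a := by
  intro a ha
  set S := amalgDup R I with hS
  let s : S := ⟨(a, a), mem_amalgDup.mpr (by simp)⟩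
  let v : Fin 1 → S := fun _ => s
  let N : Submodule S (Fin 1 → S) := Submodule.span S {v}
  have hmem1 : ∀ x ∈ N, ((x 0 : S) : R × R).1 ∈ I := by
    intro x hx
    obtain ⟨t, rfl⟩ := Submodule.mem_span_singleton.mp hx
    show ((t * s : S) : R × R).1 ∈ I
    exact I.mul_mem_left _ ha
  let φ : N →ₗ[S] S :=
  { toFun := fun x => ⟨((((x : Fin 1 → S) 0 : S) : R × R).1, 0),
      mem_amalgDup.mpr (by simpa using I.neg_mem (hmem1 x.1 x.2))⟩
    map_add' := fun x y => Subtype.ext (by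
      show (_, (0:R)) = _
      have : (((x + y : N) : Fin 1 → S) 0 : R × R).1
          = ((x : Fin 1 → S) 0 : R × R).1 + ((y : Fin 1 → S) 0 : R × R).1 := rfl
      simp [this, Prod.ext_iff])
    map_smul' := fun t x => Subtype.ext (by
      show (_, (0:R)) = _
      have : (((t • x : N) : Fin 1 → S) 0 : R × R).1
          = (t : R × R).1 * ((x : Fin 1 → S) 0 : R × R).1 := rfl
      simp [this, Prod.ext_iff]) }
  obtain ⟨ψ, hψ⟩ := h 1 N ⟨{v}, by simp [N]⟩ φ
  have hv : v ∈ N := Submodule.mem_span_singleton_self v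
  have h1 : ψ v = φ ⟨v, hv⟩ := hψ ⟨v, hv⟩
  set c : S := ψ (fun _ => 1) with hc
  have hsc : ψ v = s * c := by
    have : v = s • (fun _ => (1 : S)) := funext fun i => (mul_one s).symm
    rw [this, map_smul, smul_eq_mul]
  have h2 : ((s * c : S) : R × R) = (a, 0) := by
    rw [← hsc, h1]; rfl
  have h2' : (a * ((c : R × R)).1, a * ((c : R × R)).2) = (a, 0) := by
    rw [← h2]; rfl
  have e1 : a * ((c : R × R)).1 = a := (Prod.ext_iff.mp h2').1
  have e2 : a * ((c : R × R)).2 = 0 := (Prod.ext_iff.mp h2').2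
  refine ⟨((c : R × R)).1 - ((c : R × R)).2, ?_, ?_⟩
  · simpa using I.neg_mem c.2
  · rw [mul_sub, e1, e2, sub_zero]

set_option maxHeartbeats 1000000 in
set_option synthInstance.maxHeartbeats 400000 in
private lemma flat_of_pure {R : Type u} [CommRing R] (I : Ideal R)
    (hp : ∀ a ∈ I, ∃ b ∈ I, a * b = a) : Module.Flat R (R ⧸ I) := by
  rw [Module.Flat.iff_forall_isTrivialRelation]
  intro ι f x hfx
  choose g hg using fun i => Ideal.Quotient.mk_surjective (x i)
  have hc : (∑ i, f i * g i) ∈ I := by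
    rw [← Ideal.Quotient.eq_zero_iff_mem, map_sum, ← hfx]
    refine Finset.sum_congr rfl fun i _ => ?_
    rw [← hg i]; rfl
  obtain ⟨e, he, hce⟩ := hp _ hc
  refine ⟨1, fun i _ => g i * (1 - e), fun _ => Ideal.Quotient.mk I 1, ?_, ?_⟩
  · intro i
    rw [Fintype.sum_unique, ← hg i]
    have : (g i * (1 - e)) • Ideal.Quotient.mk I 1 = Ideal.Quotient.mk I (g i * (1 - e) * 1) := rfl
    rw [this, Ideal.Quotient.mk_eq_mk_iff_sub_mem]
    have : g i - g i * (1 - e) * 1 = g i * e := by ring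
    rw [this]
    exact I.mul_mem_left _ he
  · intro j
    have : ∑ i, f i * (g i * (1 - e)) = (∑ i, f i * g i) * (1 - e) := by
      rw [Finset.sum_mul]; exact Finset.sum_congr rfl fun i _ => by ring
    rw [this, mul_sub, mul_one, hce, sub_self]

set_option maxHeartbeats 1000000 in
set_option synthInstance.maxHeartbeats 400000 in
private lemma fpinj_of_amalg {R : Type*} [CommRing R] (I : Ideal R)
    (h : IsFPInjective (amalgDup R I) (amalgDup R I)) : IsFPInjective R R := by
  intro n N hN φ
  set S := amalgDup R I with hS
  obtain ⟨t, ht⟩ := hN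
  let δ : R → S := fun r => ⟨(r, r), mem_amalgDup.mpr (by simp)⟩
  let emb : (Fin n → R) → (Fin n → S) := fun v i => δ (v i)
  let p₁ : (Fin n → S) → (Fin n → R) := fun x i => ((x i : S) : R × R).1
  let p₂ : (Fin n → S) → (Fin n → R) := fun x i => ((x i : S) : R × R).2
  let N' : Submodule S (Fin n → S) := Submodule.span S (emb '' ↑t)
  have key : ∀ x ∈ N', ∃ (h₁ : p₁ x ∈ N) (h₂ : p₂ x ∈ N),
      φ ⟨p₂ x, h₂⟩ - φ ⟨p₁ x, h₁⟩ ∈ I := by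
    intro x hx
    induction hx using Submodule.span_induction with
    | mem w hw =>
        obtain ⟨u, hu, rfl⟩ := hw
        have hu' : u ∈ N := ht ▸ Submodule.subset_span hu
        refine ⟨hu', hu', ?_⟩
        have : (⟨p₂ (emb u), hu'⟩ : N) = ⟨p₁ (emb u), hu'⟩ := rfl
        rw [this, sub_self]; exact I.zero_mem
    | zero =>
        refine ⟨N.zero_mem, N.zero_mem, ?_⟩
        have e2 : (⟨p₂ (0 : Fin n → S), N.zero_mem⟩ : N) = 0 := rfl
        have e1 : (⟨p₁ (0 : Fin n → S), N.zero_mem⟩ : N) = 0 := rfl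
        rw [e1, e2, map_zero, sub_self]; exact I.zero_mem
    | add x y hx hy ihx ihy =>
        obtain ⟨h1x, h2x, hIx⟩ := ihx
        obtain ⟨h1y, h2y, hIy⟩ := ihy
        refine ⟨N.add_mem h1x h1y, N.add_mem h2x h2y, ?_⟩
        have e1 : (⟨p₁ (x + y), N.add_mem h1x h1y⟩ : N)
            = (⟨p₁ x, h1x⟩ : N) + ⟨p₁ y, h1y⟩ := rfl
        have e2 : (⟨p₂ (x + y), N.add_mem h2x h2y⟩ : N)
            = (⟨p₂ x, h2x⟩ : N) + ⟨p₂ y, h2y⟩ := rfl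
        rw [e1, e2, map_add, map_add]
        have : φ ⟨p₂ x, h2x⟩ + φ ⟨p₂ y, h2y⟩ - (φ ⟨p₁ x, h1x⟩ + φ ⟨p₁ y, h1y⟩)
            = (φ ⟨p₂ x, h2x⟩ - φ ⟨p₁ x, h1x⟩) + (φ ⟨p₂ y, h2y⟩ - φ ⟨p₁ y, h1y⟩) := by ring
        rw [this]
        exact I.add_mem hIx hIy
    | smul a x hx ihx =>
        obtain ⟨h1, h2, hI⟩ := ihx
        refine ⟨N.smul_mem ((a : R × R).1) h1, N.smul_mem ((a : R × R).2) h2, ?_⟩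
        have e1 : (⟨p₁ (a • x), N.smul_mem _ h1⟩ : N)
            = (a : R × R).1 • (⟨p₁ x, h1⟩ : N) := rfl
        have e2 : (⟨p₂ (a • x), N.smul_mem _ h2⟩ : N)
            = (a : R × R).2 • (⟨p₂ x, h2⟩ : N) := rfl
        rw [e1, e2, map_smul, map_smul, smul_eq_mul, smul_eq_mul]
        have : (a : R × R).2 * φ ⟨p₂ x, h2⟩ - (a : R × R).1 * φ ⟨p₁ x, h1⟩
            = (a : R × R).2 * (φ ⟨p₂ x, h2⟩ - φ ⟨p₁ x, h1⟩)
              + ((a : R × R).2 - (a : R × R).1) * φ ⟨p₁ x, h1⟩ := by ring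
        rw [this]
        exact I.add_mem (I.mul_mem_left _ hI) (I.mul_mem_right _ a.2)
  have mem1 : ∀ x : N', p₁ x.1 ∈ N := fun x => (key x.1 x.2).choose
  have mem2 : ∀ x : N', p₂ x.1 ∈ N := fun x => (key x.1 x.2).choose_spec.choose
  have keyI : ∀ x : N', φ ⟨p₂ x.1, mem2 x⟩ - φ ⟨p₁ x.1, mem1 x⟩ ∈ I :=
    fun x => (key x.1 x.2).choose_spec.choose_spec
  let φ' : N' →ₗ[S] S :=
  { toFun := fun x => ⟨(φ ⟨p₁ x.1, mem1 x⟩, φ ⟨p₂ x.1, mem2 x⟩), mem_amalgDup.mpr (keyI x)⟩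
    map_add' := fun x y => Subtype.ext (by
      have e1 : (⟨p₁ ((x + y : N') : Fin n → S), mem1 (x + y)⟩ : N)
          = (⟨p₁ x.1, mem1 x⟩ : N) + ⟨p₁ y.1, mem1 y⟩ := rfl
      have e2 : (⟨p₂ ((x + y : N') : Fin n → S), mem2 (x + y)⟩ : N)
          = (⟨p₂ x.1, mem2 x⟩ : N) + ⟨p₂ y.1, mem2 y⟩ := rfl
      show (φ ⟨p₁ ((x + y : N') : Fin n → S), _⟩, φ ⟨p₂ ((x + y : N') : Fin n → S), _⟩) = _
      rw [e1, e2, map_add, map_add]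
      rfl)
    map_smul' := fun a x => Subtype.ext (by
      have e1 : (⟨p₁ ((a • x : N') : Fin n → S), mem1 (a • x)⟩ : N)
          = (a : R × R).1 • (⟨p₁ x.1, mem1 x⟩ : N) := rfl
      have e2 : (⟨p₂ ((a • x : N') : Fin n → S), mem2 (a • x)⟩ : N)
          = (a : R × R).2 • (⟨p₂ x.1, mem2 x⟩ : N) := rfl
      show (φ ⟨p₁ ((a • x : N') : Fin n → S), _⟩, φ ⟨p₂ ((a • x : N') : Fin n → S), _⟩) = _
      rw [e1, e2, map_smul, map_smul]
      rfl) }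
  obtain ⟨ψ', hψ'⟩ := h n N' (Submodule.fg_span (t.finite_toSet.image emb)) φ'
  let ψ : (Fin n → R) →ₗ[R] R :=
  { toFun := fun v => ((ψ' (emb v) : S) : R × R).1
    map_add' := fun u v => by
      have e : emb (u + v) = emb u + emb v := rfl
      show ((ψ' (emb (u + v)) : S) : R × R).1 = _
      rw [e, map_add]; rfl
    map_smul' := fun r v => by
      have e : emb (r • v) = δ r • emb v := rfl
      show ((ψ' (emb (r • v)) : S) : R × R).1 = _
      rw [e, map_smul]; rfl }
  refine ⟨ψ, fun x => ?_⟩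
  have embN : ∀ v, v ∈ Submodule.span R (t : Set (Fin n → R)) → emb v ∈ N' := by
    intro v hv
    induction hv using Submodule.span_induction with
    | mem w hw => exact Submodule.subset_span ⟨w, hw, rfl⟩
    | zero =>
        have : emb (0 : Fin n → R) = 0 := rfl
        rw [this]; exact N'.zero_mem
    | add u v hu hv ihu ihv =>
        have : emb (u + v) = emb u + emb v := rfl
        rw [this]; exact N'.add_mem ihu ihv
    | smul r u hu ihu =>
        have : emb (r • u) = δ r • emb u := rfl
        rw [this]; exact N'.smul_mem _ ihu
  have hxN' : emb x.1 ∈ N' := embN _ (ht ▸ x.2)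
  have h1 : ψ' (emb x.1) = φ' ⟨emb x.1, hxN'⟩ := hψ' ⟨emb x.1, hxN'⟩
  show ((ψ' (emb x.1) : S) : R × R).1 = φ x
  rw [h1]
  show φ ⟨p₁ (emb x.1), mem1 ⟨emb x.1, hxN'⟩⟩ = φ x
  have : (⟨p₁ (emb x.1), mem1 ⟨emb x.1, hxN'⟩⟩ : N) = x := Subtype.ext rfl
  rw [this]

set_option maxHeartbeats 1000000 in
set_option synthInstance.maxHeartbeats 400000 in
/-- If the amalgamated duplication `R ⋈ I` is self FP-injective, then `I` is a pure
ideal of `R` (that is, `R/I` is flat) and `R` is self FP-injective. -/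
theorem stmt_9 {R : Type*} [CommRing R] (I : Ideal R)
    (h : IsFPInjective (amalgDup R I) (amalgDup R I)) :
    Module.Flat R (R ⧸ I) ∧ IsFPInjective R R := by
  exact ⟨flat_of_pure I (amalg_pure I h), fpinj_of_amalg I h⟩
end

section
/- Let R be a commutative ring and I a pure ideal of R. If R is self FP-injective, then the amalgamated duplication R ⋈ I is self FP-injective. -/
set_option synthInstance.maxHeartbeats 1000000
set_option maxHeartbeats 1000000

open scoped TensorProduct


private lemma pure_single {R : Type*} [CommRing R] {I : Ideal R}
    (hpure : Module.Flat R (R ⧸ I)) {a : R} (ha : a ∈ I) : ∃ e ∈ I, a * e = a := by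
  classical
  set J : Ideal R := Ideal.span {a} with hJ
  have haJ : a ∈ J := Ideal.subset_span rfl
  have hinj : Function.Injective (LinearMap.rTensor (R ⧸ I) J.subtype) :=
    Module.Flat.rTensor_preserves_injective_linearMap _ J.injective_subtype
  have hmk : (Ideal.Quotient.mk I) a = 0 := Ideal.Quotient.eq_zero_iff_mem.2 ha
  have h0 : ((⟨a, haJ⟩ : J) ⊗ₜ[R] (Ideal.Quotient.mk I 1) : (↥J) ⊗[R] (R ⧸ I)) = 0 := by
    apply hinj
    rw [map_zero, LinearMap.rTensor_tmul]
    have h1 : (a ⊗ₜ[R] (Ideal.Quotient.mk I 1) : R ⊗[R] (R ⧸ I))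
        = (1 : R) ⊗ₜ[R] (a • (Ideal.Quotient.mk I 1)) := by
      rw [← TensorProduct.smul_tmul, smul_eq_mul, mul_one]
    have h2 : a • (Ideal.Quotient.mk I (1 : R)) = 0 := by
      rw [Algebra.smul_def, Ideal.Quotient.algebraMap_eq, hmk, zero_mul]
    simp only [Submodule.coe_subtype, h1, h2, TensorProduct.tmul_zero]
  have hmem : (⟨a, haJ⟩ : J) ∈ (I • ⊤ : Submodule R J) := by
    have h3 := congrArg (TensorProduct.tensorQuotEquivQuotSMul J I) h0
    rw [map_zero, TensorProduct.tensorQuotEquivQuotSMul_tmul_mk, one_smul] at h3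
    exact (Submodule.Quotient.mk_eq_zero _).1 h3
  have hmul : a ∈ I * J := by
    have hmap : a ∈ Submodule.map J.subtype (I • ⊤ : Submodule R J) := ⟨⟨a, haJ⟩, hmem, rfl⟩
    rw [Submodule.map_smul'', Submodule.map_top, Submodule.range_subtype] at hmap
    rwa [Ideal.smul_eq_mul] at hmap
  rw [hJ, Ideal.mem_mul_span_singleton] at hmul
  obtain ⟨z, hz, hza⟩ := hmul
  exact ⟨z, hz, by rw [mul_comm]; exact hza⟩

private lemma pure_finset {R : Type*} [CommRing R] {I : Ideal R}
    (hp : ∀ a ∈ I, ∃ e ∈ I, a * e = a)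
    (T : Finset R) (hT : ∀ a ∈ T, a ∈ I) : ∃ e ∈ I, ∀ a ∈ T, a * e = a := by
  classical
  revert hT
  refine Finset.induction_on T ?_ ?_
  · intro _; exact ⟨0, I.zero_mem, by simp⟩
  · intro a T' haT' ih hT
    obtain ⟨e1, he1, hae1⟩ := hp a (hT a (Finset.mem_insert_self a T'))
    obtain ⟨e2, he2, he2T⟩ := ih (fun b hb => hT b (Finset.mem_insert_of_mem hb))
    refine ⟨e1 + e2 - e1 * e2,
      I.sub_mem (I.add_mem he1 he2) (I.mul_mem_right _ he1), ?_⟩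
    intro b hb
    rcases Finset.mem_insert.1 hb with rfl | hb'
    · linear_combination (1 - e2) * hae1
    · linear_combination (1 - e1) * (he2T b hb')

private lemma eqFP {A : Type*} [CommRing A] (h : IsFPInjective A A)
    {m n : ℕ} (x : Fin m → Fin n → A) (b : Fin m → A)
    (hc : ∀ l : Fin m → A, ∑ i, l i • x i = 0 → ∑ i, l i * b i = 0) :
    ∃ y : Fin n → A, ∀ i, ∑ j, x i j * y j = b i := by
  classical
  set F : (Fin m → A) →ₗ[A] (Fin n → A) := Fintype.linearCombination A x with hF
  set G : (Fin m → A) →ₗ[A] A := Fintype.linearCombination A b with hG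
  have hker : LinearMap.ker F ≤ LinearMap.ker G := by
    intro l hl
    simp only [LinearMap.mem_ker] at hl ⊢
    have h2 := hc l (by simpa [hF, Fintype.linearCombination_apply] using hl)
    simpa [hG, Fintype.linearCombination_apply, smul_eq_mul] using h2
  have hNfg : (LinearMap.range F).FG := by
    rw [Fintype.range_linearCombination]
    exact Submodule.fg_span (Set.finite_range x)
  set φ : (LinearMap.range F) →ₗ[A] A := (Submodule.liftQ (LinearMap.ker F) G hker).comp
      (F.quotKerEquivRange.symm.toLinearMap) with hφ
  obtain ⟨ψ, hψ⟩ := h n (LinearMap.range F) hNfg φ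
  refine ⟨fun j => ψ (Pi.single j 1), fun i => ?_⟩
  have hxi : F (Pi.single i 1) = x i := by
    simp [hF]
  have hmem : x i ∈ LinearMap.range F := ⟨Pi.single i 1, hxi⟩
  have hφx : φ (⟨x i, hmem⟩ : LinearMap.range F) = b i := by
    have hx2 : (⟨x i, hmem⟩ : LinearMap.range F)
        = ⟨F (Pi.single i 1), LinearMap.mem_range_self F _⟩ := Subtype.ext hxi.symm
    rw [hx2, hφ]
    simp only [LinearMap.comp_apply, LinearEquiv.coe_toLinearMap,
      LinearMap.quotKerEquivRange_symm_apply_image]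
    rw [Submodule.mkQ_apply, Submodule.liftQ_apply]
    simp [hG]
  have hpsix := hψ ⟨x i, hmem⟩
  rw [hφx] at hpsix
  rw [← hpsix]
  show ∑ j, x i j * ψ (Pi.single j 1) = ψ (x i)
  have hxsum : x i = ∑ j, (x i j) • (Pi.single j (1 : A) : Fin n → A) := by
    ext k
    simp [Pi.single_apply, Finset.sum_apply]
  conv_rhs => rw [hxsum]
  rw [map_sum]
  simp only [map_smul, smul_eq_mul]

private lemma toFP {A : Type*} [CommRing A]
    (hs : ∀ (m n : ℕ) (x : Fin m → Fin n → A) (b : Fin m → A),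
        (∀ l : Fin m → A, ∑ i, l i • x i = 0 → ∑ i, l i * b i = 0) →
        ∃ y : Fin n → A, ∀ i, ∑ j, x i j * y j = b i) :
    IsFPInjective A A := by
  classical
  intro n N hN φ
  obtain ⟨m, x, hspan⟩ := Submodule.fg_iff_exists_fin_generating_family.1 hN
  have hmem : ∀ i, x i ∈ N := fun i => hspan ▸ Submodule.subset_span (Set.mem_range_self i)
  set b : Fin m → A := fun i => φ ⟨x i, hmem i⟩ with hb
  have hc : ∀ l : Fin m → A, ∑ i, l i • x i = 0 → ∑ i, l i * b i = 0 := by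
    intro l hl
    have hsum0 : (∑ i, l i • (⟨x i, hmem i⟩ : N)) = 0 := by
      apply Subtype.ext
      push_cast
      simpa using hl
    have h0 : φ (∑ i, l i • (⟨x i, hmem i⟩ : N)) = 0 := by rw [hsum0, map_zero]
    rw [map_sum] at h0
    simpa only [map_smul, smul_eq_mul] using h0
  obtain ⟨y, hy⟩ := hs m n x b hc
  refine ⟨Fintype.linearCombination A y, ?_⟩
  rintro ⟨z, hz⟩
  have hz' : z ∈ Submodule.span A (Set.range x) := hspan ▸ hz
  have main : ∀ z, z ∈ Submodule.span A (Set.range x) →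
      ∀ hz : z ∈ N, Fintype.linearCombination A y z = φ ⟨z, hz⟩ := by
    intro z hz'
    induction hz' using Submodule.span_induction with
    | mem w hw =>
      intro hwN
      obtain ⟨i, rfl⟩ := hw
      have : φ ⟨x i, hwN⟩ = b i := rfl
      rw [this, ← hy i]
      simp [Fintype.linearCombination_apply, smul_eq_mul, mul_comm]
    | zero => intro h0; simp [show (⟨0, h0⟩ : N) = 0 from rfl]
    | add u v hu hv ihu ihv =>
      intro huv
      have hu' : u ∈ N := hspan ▸ hu
      have hv' : v ∈ N := hspan ▸ hv
      have : (⟨u + v, huv⟩ : N) = ⟨u, hu'⟩ + ⟨v, hv'⟩ := rfl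
      rw [this, map_add, map_add, ihu hu', ihv hv']
    | smul a u hu ihu =>
      intro hau
      have hu' : u ∈ N := hspan ▸ hu
      have : (⟨a • u, hau⟩ : N) = a • ⟨u, hu'⟩ := rfl
      rw [this, map_smul, map_smul, ihu hu']
  exact main z hz' hz

private lemma coord_consistency {S : Type*} [CommRing S] {R : Type*} [CommRing R]
    (π : S →+* R) (D : R →+* S) (hD : ∀ r, π (D r) = r)
    (hE : ∀ (k : ℕ) (z : Fin k → S), (∀ j, π (z j) = 0) →
      ∃ E : S, π E = 0 ∧ ∀ j, E * z j = z j)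
    {m n : ℕ} (x : Fin m → Fin n → S) (b : Fin m → S)
    (hc : ∀ l : Fin m → S, ∑ i, l i • x i = 0 → ∑ i, l i * b i = 0)
    (l : Fin m → R) (hl : (∑ i, l i • fun j => π (x i j)) = 0) :
    ∑ i, l i * π (b i) = 0 := by
  classical
  set z : Fin n → S := fun j => ∑ i, D (l i) * x i j with hz
  have hz0 : ∀ j, π (z j) = 0 := by
    intro j
    have hlj := congrFun hl j
    simp only [Finset.sum_apply, Pi.smul_apply, smul_eq_mul, Pi.zero_apply] at hlj
    rw [hz]
    simp only [map_sum, map_mul, hD]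
    exact hlj
  obtain ⟨E, hE0, hEz⟩ := hE n z hz0
  have hrel : (∑ i, (D (l i) - E * D (l i)) • x i) = 0 := by
    funext j
    simp only [Finset.sum_apply, Pi.smul_apply, smul_eq_mul, Pi.zero_apply, sub_mul]
    rw [Finset.sum_sub_distrib]
    have h1 : ∑ i, E * D (l i) * x i j = E * z j := by
      rw [hz, Finset.mul_sum]
      exact Finset.sum_congr rfl fun i _ => by ring
    rw [h1, hEz j, hz]
    simp
  have hb0 := hc _ hrel
  have := congrArg π hb0
  simp only [map_sum, map_mul, map_sub, map_zero, hD, hE0, zero_mul, sub_zero] at this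
  exact this

/-- If `I` is a pure ideal of `R` (i.e. `R/I` is flat) and `R` is self FP-injective,
then the amalgamated duplication `R ⋈ I` is self FP-injective. -/
theorem stmt_10 {R : Type*} [CommRing R] (I : Ideal R)
    (hpure : Module.Flat R (R ⧸ I)) (h : IsFPInjective R R) :
    IsFPInjective (amalgDup R I) (amalgDup R I) := by
  classical
  have hp : ∀ a ∈ I, ∃ e ∈ I, a * e = a := fun a ha => pure_single hpure ha
  apply toFP
  intro m n x b hc
  set p1 : amalgDup R I →+* R := (RingHom.fst R R).comp (amalgDup R I).subtype with hp1
  set p2 : amalgDup R I →+* R := (RingHom.snd R R).comp (amalgDup R I).subtype with hp2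
  have memD : ∀ r : R, ((r, r) : R × R) ∈ amalgDup R I := fun r => by
    show r - r ∈ I
    simp
  set D : R →+* amalgDup R I :=
    { toFun := fun r => ⟨(r, r), memD r⟩
      map_one' := rfl
      map_mul' := fun a b => rfl
      map_zero' := rfl
      map_add' := fun a b => rfl } with hD
  -- membership facts
  have hmemI : ∀ s : amalgDup R I, p2 s - p1 s ∈ I := fun s => s.2
  have hext : ∀ s t : amalgDup R I, p1 s = p1 t → p2 s = p2 t → s = t := by
    intro s t h1 h2
    exact Subtype.ext (Prod.ext h1 h2)
  have hE1 : ∀ (k : ℕ) (z : Fin k → amalgDup R I), (∀ j, p1 (z j) = 0) →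
      ∃ E : amalgDup R I, p1 E = 0 ∧ ∀ j, E * z j = z j := by
    intro k z hz0
    have hmem2 : ∀ j, p2 (z j) ∈ I := by
      intro j
      have := hmemI (z j)
      rwa [hz0 j, sub_zero] at this
    obtain ⟨e, heI, hefix⟩ := pure_finset hp
      (Finset.image (fun j => p2 (z j)) Finset.univ)
      (by
        intro a ha
        obtain ⟨j, _, rfl⟩ := Finset.mem_image.1 ha
        exact hmem2 j)
    refine ⟨⟨(0, e), by show e - 0 ∈ I; simpa using heI⟩, rfl, ?_⟩
    intro j
    apply hext
    · show (0 : R) * p1 (z j) = p1 (z j)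
      rw [hz0 j, mul_zero]
    · show e * p2 (z j) = p2 (z j)
      rw [mul_comm]
      exact hefix _ (Finset.mem_image.2 ⟨j, Finset.mem_univ j, rfl⟩)
  have hE2 : ∀ (k : ℕ) (z : Fin k → amalgDup R I), (∀ j, p2 (z j) = 0) →
      ∃ E : amalgDup R I, p2 E = 0 ∧ ∀ j, E * z j = z j := by
    intro k z hz0
    have hmem2 : ∀ j, p1 (z j) ∈ I := by
      intro j
      have := hmemI (z j)
      rw [hz0 j, zero_sub] at this
      simpa using I.neg_mem this
    obtain ⟨e, heI, hefix⟩ := pure_finset hp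
      (Finset.image (fun j => p1 (z j)) Finset.univ)
      (by
        intro a ha
        obtain ⟨j, _, rfl⟩ := Finset.mem_image.1 ha
        exact hmem2 j)
    refine ⟨⟨(e, 0), by show (0 : R) - e ∈ I; simpa using I.neg_mem heI⟩, rfl, ?_⟩
    intro j
    apply hext
    · show e * p1 (z j) = p1 (z j)
      rw [mul_comm]
      exact hefix _ (Finset.mem_image.2 ⟨j, Finset.mem_univ j, rfl⟩)
    · show (0 : R) * p2 (z j) = p2 (z j)
      rw [hz0 j, mul_zero]
  obtain ⟨y1, hy1⟩ := eqFP h (fun i j => p1 (x i j)) (fun i => p1 (b i))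
    (fun l hl => coord_consistency p1 D (fun r => rfl) hE1 x b hc l hl)
  obtain ⟨y2, hy2⟩ := eqFP h (fun i j => p2 (x i j)) (fun i => p2 (b i))
    (fun l hl => coord_consistency p2 D (fun r => rfl) hE2 x b hc l hl)
  -- purity element for the differences
  set T : Finset R :=
    (Finset.image (fun p : Fin m × Fin n => p2 (x p.1 p.2) - p1 (x p.1 p.2)) Finset.univ) ∪
    (Finset.image (fun i => p2 (b i) - p1 (b i)) Finset.univ) with hT
  obtain ⟨e, heI, hefix⟩ := pure_finset hp T
    (by
      intro a ha
      rcases Finset.mem_union.1 ha with ha | ha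
      · obtain ⟨p, _, rfl⟩ := Finset.mem_image.1 ha
        exact hmemI _
      · obtain ⟨i, _, rfl⟩ := Finset.mem_image.1 ha
        exact hmemI _)
  set y : Fin n → amalgDup R I := fun j =>
    ⟨(y1 j, y1 j + e * (y2 j - y1 j)), by
      show (y1 j + e * (y2 j - y1 j)) - y1 j ∈ I
      have : (y1 j + e * (y2 j - y1 j)) - y1 j = e * (y2 j - y1 j) := by ring
      rw [this]
      exact I.mul_mem_right _ heI⟩ with hy
  refine ⟨y, fun i => ?_⟩
  apply hext
  · -- first coordinates
    rw [map_sum]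
    have hterm : ∀ j, p1 (x i j * y j) = p1 (x i j) * y1 j := fun j => by
      rw [map_mul]; rfl
    rw [Finset.sum_congr rfl fun j _ => hterm j]
    exact hy1 i
  · -- second coordinates
    rw [map_sum]
    have hterm : ∀ j, p2 (x i j * y j) = p2 (x i j) * (y1 j + e * (y2 j - y1 j)) := fun j => by
      rw [map_mul]; rfl
    rw [Finset.sum_congr rfl fun j _ => hterm j]
    have hsplit : ∑ j, p2 (x i j) * (y1 j + e * (y2 j - y1 j))
        = (∑ j, p2 (x i j) * y1 j) + e * (∑ j, p2 (x i j) * y2 j)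
          - e * (∑ j, p2 (x i j) * y1 j) := by
      rw [Finset.mul_sum, Finset.mul_sum, ← Finset.sum_add_distrib, ← Finset.sum_sub_distrib]
      exact Finset.sum_congr rfl fun j _ => by ring
    rw [hsplit]
    have hA : ∑ j, (p2 (x i j) - p1 (x i j)) * y1 j
        = (∑ j, p2 (x i j) * y1 j) - ∑ j, p1 (x i j) * y1 j := by
      rw [← Finset.sum_sub_distrib]
      exact Finset.sum_congr rfl fun j _ => by ring
    have hu : (∑ j, (p2 (x i j) - p1 (x i j)) * y1 j) * e
        = ∑ j, (p2 (x i j) - p1 (x i j)) * y1 j := by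
      rw [Finset.sum_mul]
      refine Finset.sum_congr rfl fun j _ => ?_
      have hd : (p2 (x i j) - p1 (x i j)) * e = p2 (x i j) - p1 (x i j) :=
        hefix _ (Finset.mem_union_left _
          (Finset.mem_image.2 ⟨(i, j), Finset.mem_univ _, rfl⟩))
      linear_combination y1 j * hd
    rw [hA] at hu
    have hg : (p2 (b i) - p1 (b i)) * e = p2 (b i) - p1 (b i) :=
      hefix _ (Finset.mem_union_right _
        (Finset.mem_image.2 ⟨i, Finset.mem_univ _, rfl⟩))
    linear_combination (-1 : R) * hu + e * (hy2 i) + hg + (1 - e) * (hy1 i)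
end

section
/- Let R be a commutative ring and suppose there is an exact sequence 0 → R/Rr → G → Rr → 0 with G projective of constant rank 1, where (0:r) = Ra + Rb. Then there exist u, v ∈ R and s, t ∈ (0:r) such that bu = av, su = a(1+t), and sv = b(1+t). -/
open Module

theorem aux_local {R : Type*} [CommRing R] (P : Ideal R) [P.IsPrime]
    {G : Type*} [AddCommGroup G] [Module R G]
    [Module.Projective R G] [Module.Finite R G]
    (hrank : Module.finrank (Localization.AtPrime P) (LocalizedModule P.primeCompl G) = 1)
    (g h : G) (σ1 σ2 : G →ₗ[R] R)
    (hsec : ∀ m : G, σ1 m • g + σ2 m • h = m) :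
    algebraMap R (Localization.AtPrime P) (σ1 g + σ2 h - 1) = 0 := by
  set S := P.primeCompl
  set R' := Localization.AtPrime P with hR'
  set G' := LocalizedModule S G with hG'
  let ι : G →ₗ[R] G' := LocalizedModule.mkLinearMap S G
  haveI : Module.Finite R' G' := Module.Finite.of_isLocalizedModule S ι
  haveI : Module.Projective R' G' := Module.projective_of_isLocalizedModule S ι
  haveI : Module.FinitePresentation R' G' := Module.finitePresentation_of_projective R' G'
  haveI : Module.Free R' G' := Module.free_of_flat_of_isLocalRing
  let B : Basis (Fin 1) R' G' := Module.finBasisOfFinrankEq R' G' hrank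
  let σ1' : G' →ₗ[R'] R' :=
    IsLocalizedModule.mapExtendScalars S ι (Algebra.linearMap R R') R' σ1
  let σ2' : G' →ₗ[R'] R' :=
    IsLocalizedModule.mapExtendScalars S ι (Algebra.linearMap R R') R' σ2
  have hσ1' : ∀ m : G, σ1' (ι m) = algebraMap R R' (σ1 m) := fun m => by
    simp [σ1', IsLocalizedModule.map_apply]
  have hσ2' : ∀ m : G, σ2' (ι m) = algebraMap R R' (σ2 m) := fun m => by
    simp [σ2', IsLocalizedModule.map_apply]
  have hsec' : ∀ m' : G', σ1' m' • ι g + σ2' m' • ι h = m' := by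
    intro m'
    obtain ⟨⟨x, s⟩, hx⟩ := IsLocalizedModule.surj S ι m'
    dsimp only at hx
    apply IsLocalizedModule.smul_injective ι s
    have : σ1' (s • m') • ι g + σ2' (s • m') • ι h = s • m' := by
      rw [hx, hσ1', hσ2']
      calc algebraMap R R' (σ1 x) • ι g + algebraMap R R' (σ2 x) • ι h
          = (σ1 x) • ι g + (σ2 x) • ι h := by
            rw [algebraMap_smul, algebraMap_smul]
        _ = ι (σ1 x • g + σ2 x • h) := by simp [map_add, map_smul]
        _ = ι x := by rw [hsec]
    simpa [map_smul, smul_add, smul_comm (s : R)] using this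
  set α := B.repr (ι g) 0 with hα
  set γ := B.repr (ι h) 0 with hγ
  have hg : ι g = α • B 0 := by
    conv_lhs => rw [← B.sum_repr (ι g)]
    simp [hα]
  have hh : ι h = γ • B 0 := by
    conv_lhs => rw [← B.sum_repr (ι h)]
    simp [hγ]
  set m := σ1' (B 0) with hm
  set n := σ2' (B 0) with hn
  have hβ : m • ι g + n • ι h = B 0 := hsec' (B 0)
  have h1 : m * α + n * γ = 1 := by
    have := congrArg (fun z => B.repr z 0) hβ
    simpa [map_add, map_smul, smul_eq_mul, mul_comm] using this
  have hx' : algebraMap R R' (σ1 g) = α * m := by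
    rw [← hσ1' g, hg, map_smul, smul_eq_mul]
  have hw' : algebraMap R R' (σ2 h) = γ * n := by
    rw [← hσ2' h, hh, map_smul, smul_eq_mul]
  rw [map_sub, map_add, map_one, hx', hw']
  have : α * m + γ * n = 1 := by rw [mul_comm α m, mul_comm γ n]; exact h1
  rw [this, sub_self]

/-- Let `R` be a commutative ring, `r ∈ R` with `(0:r) = Ra + Rb`, and suppose there is
an exact sequence `0 → R/Rr → G → Rr → 0` with `G` finitely generated projective of
constant rank `1`.  Then there exist `u, v ∈ R` and `s, t ∈ (0:r)` such that `bu = av`,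
`su = a(1+t)` and `sv = b(1+t)`. -/
theorem stmt_13 {R : Type*} [CommRing R] (r a b : R)
    (hann : (Ideal.span ({r} : Set R)).annihilator = Ideal.span {a, b})
    (G : Type*) [AddCommGroup G] [Module R G]
    (hproj : Module.Projective R G) (hfin : Module.Finite R G)
    (hrank : ∀ (P : Ideal R) [P.IsPrime],
      Module.finrank (Localization.AtPrime P) (LocalizedModule P.primeCompl G) = 1)
    (e : (R ⧸ Ideal.span ({r} : Set R)) →ₗ[R] G) (p : G →ₗ[R] R)
    (he : Function.Injective e)
    (hp : LinearMap.range p = Ideal.span ({r} : Set R))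
    (hex : LinearMap.ker p = LinearMap.range e) :
    ∃ u v s t : R, s * r = 0 ∧ t * r = 0 ∧
      b * u = a * v ∧ s * u = a * (1 + t) ∧ s * v = b * (1 + t) := by
  haveI := hproj; haveI := hfin
  -- a and b annihilate r
  have hmem : ∀ c : R, c ∈ Ideal.span ({a, b} : Set R) → c * r = 0 := by
    intro c hc
    rw [← hann] at hc
    have := Submodule.mem_annihilator.mp hc r (Ideal.subset_span (Set.mem_singleton r))
    simpa [smul_eq_mul] using this
  have har : a * r = 0 := hmem a (Ideal.subset_span (by simp))
  have hbr : b * r = 0 := hmem b (Ideal.subset_span (by simp))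
  obtain ⟨h, hh⟩ : ∃ h : G, p h = r := by
    have : r ∈ LinearMap.range p := by
      rw [hp]; exact Ideal.subset_span (Set.mem_singleton r)
    exact this
  set g : G := e (Ideal.Quotient.mk (Ideal.span ({r} : Set R)) 1) with hg
  have hpg : p g = 0 := by
    have h1 : g ∈ LinearMap.range e := ⟨_, rfl⟩
    rw [← hex] at h1
    exact LinearMap.mem_ker.mp h1
  have hescal : ∀ c : R, e (Ideal.Quotient.mk (Ideal.span ({r} : Set R)) c) = c • g := by
    intro c
    rw [hg, ← map_smul]
    congr 1
    rw [Algebra.smul_def, Ideal.Quotient.algebraMap_eq, map_one, mul_one]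
  have hrg : r • g = 0 := by
    rw [← hescal r,
      Ideal.Quotient.eq_zero_iff_mem.mpr (Ideal.subset_span (Set.mem_singleton r)), map_zero]
  have hker : ∀ x : G, p x = 0 → ∃ c : R, x = c • g := by
    intro x hx
    have h1 : x ∈ LinearMap.range e := by
      rw [← hex]; exact LinearMap.mem_ker.mpr hx
    obtain ⟨y, hy⟩ := h1
    obtain ⟨c, rfl⟩ := Ideal.Quotient.mk_surjective y
    exact ⟨c, by rw [← hy, hescal]⟩
  set q : (R × R) →ₗ[R] G :=
    (LinearMap.toSpanSingleton R G g).coprod (LinearMap.toSpanSingleton R G h) with hq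
  have hqapp : ∀ c : R × R, q c = c.1 • g + c.2 • h := fun c => rfl
  have hqsurj : Function.Surjective q := by
    intro m
    have h1 : p m ∈ Ideal.span ({r} : Set R) := by rw [← hp]; exact ⟨m, rfl⟩
    obtain ⟨c, hc⟩ := Ideal.mem_span_singleton'.mp h1
    obtain ⟨w, hw⟩ := hker (m - c • h) (by rw [map_sub, map_smul, hh, smul_eq_mul, hc, sub_self])
    refine ⟨(w, c), ?_⟩
    have h2 := hqapp (w, c)
    dsimp only at h2
    rw [h2, ← hw]
    abel
  obtain ⟨σ, hσ⟩ := Module.projective_lifting_property q LinearMap.id hqsurj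
  have hsec : ∀ m : G, (σ m).1 • g + (σ m).2 • h = m := by
    intro m
    have h1 := congrArg (fun f : G →ₗ[R] G => f m) hσ
    simp only [LinearMap.comp_apply, LinearMap.id_apply] at h1
    exact (hqapp (σ m)).symm.trans h1
  have hrel : ∀ c : R, c * r = 0 → ∃ u : R, u • g + c • h = 0 := by
    intro c hc
    obtain ⟨d, hd⟩ := hker (c • h) (by rw [map_smul, hh, smul_eq_mul, hc])
    exact ⟨-d, by rw [hd, neg_smul, neg_add_cancel]⟩
  obtain ⟨u, hu⟩ := hrel a har
  obtain ⟨v, hv⟩ := hrel b hbr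
  have hσrel : ∀ (c₁ : R) (c₂ : R), c₁ • g + c₂ • h = 0 →
      c₁ * (σ g).1 + c₂ * (σ h).1 = 0 ∧ c₁ * (σ g).2 + c₂ * (σ h).2 = 0 := by
    intro c₁ c₂ hcc
    have h0 : c₁ • σ g + c₂ • σ h = 0 := by
      have h1 := congrArg σ hcc
      rw [map_add, map_smul, map_smul, map_zero] at h1
      exact h1
    constructor
    · have h2 := congrArg Prod.fst h0
      simpa [smul_eq_mul] using h2
    · have h2 := congrArg Prod.snd h0
      simpa [smul_eq_mul] using h2
  obtain ⟨hE1, hE2⟩ := hσrel u a hu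
  obtain ⟨hE3, hE4⟩ := hσrel v b hv
  obtain ⟨hrx, hry⟩ := hσrel r 0 (by rw [hrg, zero_smul, add_zero])
  rw [zero_mul, add_zero] at hrx hry
  have htr : (σ g).1 + (σ h).2 - 1 = 0 := by
    apply eq_zero_of_localization
    intro J hJ
    haveI : J.IsPrime := hJ.isPrime
    exact aux_local J (hrank J) g h (LinearMap.fst R R R ∘ₗ σ) (LinearMap.snd R R R ∘ₗ σ)
      (fun m => hsec m)
  refine ⟨u, v, -(σ g).2, -(σ g).1, ?_, ?_, ?_, ?_, ?_⟩
  · linear_combination -hry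
  · linear_combination -hrx
  · linear_combination (a * v - b * u) * htr + b * hE1 - a * hE3 + u * hE4 - v * hE2
  · linear_combination -hE2 + a * htr
  · linear_combination -hE4 + b * htr
end

section
/- Let R be a local commutative ring with maximal ideal P such that every finitely presented cyclic R-module M admits an exact sequence 0 → M → G → F → M → 0 with G, F finitely generated projective. Then for any two nonzero elements a, b ∈ P, the ideals Ra and Rb are comparable; hence R is a valuation ring. -/
open LinearMap Function

section Schanuel
variable {R : Type*} [CommRing R]

/-- If `f : X → P` is a surjection onto a projective module, then `X ≃ P × ker f`. -/
noncomputable def splitEquivOfSurjective {X P : Type*} [AddCommGroup X] [Module R X]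
    [AddCommGroup P] [Module R P] [Module.Projective R P]
    (f : X →ₗ[R] P) (hf : Surjective f) :
    X ≃ₗ[R] P × (ker f) := by
  choose s hs using Module.projective_lifting_property f LinearMap.id hf
  have hs' : ∀ p, f (s p) = p := fun p => congrArg (· p) (congrArg DFunLike.coe hs)
  have hmem : ∀ c : X, ((LinearMap.id : X →ₗ[R] X) - s ∘ₗ f) c ∈ ker f := by
    intro x; simp [LinearMap.mem_ker, hs']
  refine LinearEquiv.ofLinear
    (LinearMap.prod f (((LinearMap.id : X →ₗ[R] X) - s ∘ₗ f).codRestrict (ker f) hmem))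
    (s ∘ₗ LinearMap.fst R P (ker f) + (ker f).subtype ∘ₗ LinearMap.snd R P (ker f)) ?_ ?_
  · apply LinearMap.ext
    rintro ⟨p, ⟨y, hy⟩⟩
    simp only [LinearMap.mem_ker] at hy
    ext <;> simp [hs', hy]
  · apply LinearMap.ext
    intro x
    simp
end Schanuel

section Schanuel2
variable {R : Type*} [CommRing R]
variable {A P C B Q : Type*}
  [AddCommGroup A] [Module R A] [AddCommGroup P] [Module R P]
  [AddCommGroup C] [Module R C] [AddCommGroup B] [Module R B]
  [AddCommGroup Q] [Module R Q]

/-- Schanuel's lemma. -/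
theorem schanuel [Module.Projective R P] [Module.Projective R Q]
    (iA : A →ₗ[R] P) (p : P →ₗ[R] C) (hp : Surjective p) (hA : range iA = ker p)
    (hiA : Injective iA)
    (iB : B →ₗ[R] Q) (q : Q →ₗ[R] C) (hq : Surjective q) (hB : range iB = ker q)
    (hiB : Injective iB) :
    Nonempty ((A × Q) ≃ₗ[R] (B × P)) := by
  set d : P × Q →ₗ[R] C := p ∘ₗ LinearMap.fst R P Q - q ∘ₗ LinearMap.snd R P Q with hd
  set X := LinearMap.ker d with hX
  -- the two projections
  set π₁ : X →ₗ[R] P := LinearMap.fst R P Q ∘ₗ X.subtype with hπ₁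
  set π₂ : X →ₗ[R] Q := LinearMap.snd R P Q ∘ₗ X.subtype with hπ₂
  have hdmem : ∀ z : P × Q, z ∈ X ↔ p z.1 = q z.2 := by
    intro z
    simp [hX, hd, LinearMap.mem_ker, sub_eq_zero]
  have hπ₁s : Surjective π₁ := by
    intro x
    obtain ⟨y, hy⟩ := hq (p x)
    exact ⟨⟨(x, y), (hdmem _).2 hy.symm⟩, rfl⟩
  have hπ₂s : Surjective π₂ := by
    intro y
    obtain ⟨x, hx⟩ := hp (q y)
    exact ⟨⟨(x, y), (hdmem _).2 hx⟩, rfl⟩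
  -- kernel of π₁ is B
  have kB : B ≃ₗ[R] LinearMap.ker π₁ := by
    refine LinearEquiv.ofBijective
      (LinearMap.codRestrict _ (?_ : B →ₗ[R] X) ?_) ⟨?_, ?_⟩
    · refine LinearMap.codRestrict _ ((LinearMap.inr R P Q) ∘ₗ iB) ?_
      intro b
      have hmem : iB b ∈ ker q := hB ▸ LinearMap.mem_range_self iB b
      rw [LinearMap.mem_ker] at hmem
      rw [hdmem]
      simp [hmem]
    · intro b; rfl
    · intro b b' hbb'
      apply hiB
      rw [Subtype.ext_iff, Subtype.ext_iff, Prod.ext_iff] at hbb'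
      exact hbb'.2
    · rintro ⟨⟨⟨x, y⟩, hxy⟩, hk⟩
      have hx0 : x = 0 := by simpa [hπ₁, LinearMap.mem_ker] using hk
      have : y ∈ ker q := by
        have := (hdmem (x, y)).1 hxy
        simp [hx0] at this
        simp [LinearMap.mem_ker, ← this]
      rw [← hB] at this
      obtain ⟨b, hb⟩ := this
      refine ⟨b, ?_⟩
      apply Subtype.ext; apply Subtype.ext
      subst hb hx0; rfl
  have kA : A ≃ₗ[R] LinearMap.ker π₂ := by
    refine LinearEquiv.ofBijective
      (LinearMap.codRestrict _ (?_ : A →ₗ[R] X) ?_) ⟨?_, ?_⟩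
    · refine LinearMap.codRestrict _ ((LinearMap.inl R P Q) ∘ₗ iA) ?_
      intro a
      have hmem : iA a ∈ ker p := hA ▸ LinearMap.mem_range_self iA a
      rw [LinearMap.mem_ker] at hmem
      rw [hdmem]
      simp [hmem]
    · intro a; rfl
    · intro a a' haa'
      apply hiA
      rw [Subtype.ext_iff, Subtype.ext_iff, Prod.ext_iff] at haa'
      exact haa'.1
    · rintro ⟨⟨⟨x, y⟩, hxy⟩, hk⟩
      have hy0 : y = 0 := by simpa [hπ₂, LinearMap.mem_ker] using hk
      have : x ∈ ker p := by
        have := (hdmem (x, y)).1 hxy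
        rw [LinearMap.mem_ker, this, hy0, map_zero]
      rw [← hA] at this
      obtain ⟨a, ha⟩ := this
      refine ⟨a, ?_⟩
      apply Subtype.ext; apply Subtype.ext
      subst ha hy0; rfl
  have E1 : (X : Type _) ≃ₗ[R] P × (LinearMap.ker π₁) := splitEquivOfSurjective π₁ hπ₁s
  have E2 : (X : Type _) ≃ₗ[R] Q × (LinearMap.ker π₂) := splitEquivOfSurjective π₂ hπ₂s
  exact ⟨(LinearEquiv.prodCongr kA (LinearEquiv.refl R Q)).trans <|
    (LinearEquiv.prodComm R _ Q).trans <| E2.symm.trans <| E1.trans <|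
    (LinearEquiv.prodCongr (LinearEquiv.refl R P) kB.symm).trans (LinearEquiv.prodComm R P B)⟩
end Schanuel2

section Mu
open TensorProduct IsLocalRing
variable (R : Type*) [CommRing R] [IsLocalRing R]

local notation "k" => ResidueField R

variable (X Y : Type*) [AddCommGroup X] [Module R X] [AddCommGroup Y] [Module R Y]

/-- minimal number of generators -/
noncomputable def mu : ℕ := Module.finrank k (k ⊗[R] X)

variable {R X Y}

lemma algMap_surj : Surjective (algebraMap R k) := Ideal.Quotient.mk_surjective

lemma mu_congr (e : X ≃ₗ[R] Y) : mu R X = mu R Y :=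
  LinearEquiv.finrank_eq ((LinearEquiv.lTensor k e).extendScalarsOfSurjective algMap_surj)

lemma mu_prod [Module.Finite R X] [Module.Finite R Y] :
    mu R (X × Y) = mu R X + mu R Y := by
  rw [mu, LinearEquiv.finrank_eq
    ((TensorProduct.prodRight R R k X Y).extendScalarsOfSurjective algMap_surj)]
  exact Module.finrank_prod

lemma mu_self : mu R R = 1 := by
  rw [mu, LinearEquiv.finrank_eq
    (((TensorProduct.comm R k R).trans (TensorProduct.lid R k)).extendScalarsOfSurjective
      algMap_surj)]
  exact Module.finrank_self k

lemma mu_le_of_surjective (f : X →ₗ[R] Y) (hf : Surjective f)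
    [Module.Finite R X] [Module.Finite R Y] : mu R Y ≤ mu R X := by
  set g := (f.lTensor k).extendScalarsOfSurjective (N := k ⊗[R] Y) algMap_surj with hg
  have hs : Surjective g := by
    have : Surjective (f.lTensor k) := LinearMap.lTensor_surjective k hf
    exact this
  have := LinearMap.finrank_range_le g
  rwa [LinearMap.range_eq_top.2 hs, finrank_top] at this
end Mu

section MuQuot
open TensorProduct IsLocalRing
variable {R : Type*} [CommRing R] [IsLocalRing R]

local notation "k" => ResidueField R
local notation "P" => maximalIdeal R

lemma smul_top_quot (I J : Ideal R) :
    J • (⊤ : Submodule R (R ⧸ I)) = Submodule.map I.mkQ J := by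
  apply le_antisymm
  · refine Submodule.smul_le.2 ?_
    intro r hr n _
    obtain ⟨x, rfl⟩ := I.mkQ_surjective n
    exact ⟨r * x, J.mul_mem_right x hr, by simp [Algebra.smul_def, Ideal.Quotient.algebraMap_eq]⟩
  · rintro _ ⟨x, hx, rfl⟩
    have h1 : I.mkQ x = x • (I.mkQ 1) := by
      simp [Algebra.smul_def, Ideal.Quotient.algebraMap_eq]
    rw [h1]
    exact Submodule.smul_mem_smul hx Submodule.mem_top

/-- `k ⊗ R/I ≃ R/P` when `I ≤ P`. -/
noncomputable def resFieldTensorQuot (I : Ideal R) (hI : I ≤ P) :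
    k ⊗[R] (R ⧸ I) ≃ₗ[R] k :=
  (TensorProduct.quotTensorEquivQuotSMul (R ⧸ I) P).trans
    ((Submodule.quotEquivOfEq _ _ (smul_top_quot I P)).trans
      (Submodule.quotientQuotientEquivQuotient I P hI))

lemma mu_quot (I : Ideal R) (hI : I ≤ P) : mu R (R ⧸ I) = 1 := by
  rw [mu, LinearEquiv.finrank_eq
    ((resFieldTensorQuot I hI).extendScalarsOfSurjective algMap_surj)]
  exact Module.finrank_self k

lemma nontrivial_resFieldTensorQuot (I : Ideal R) (hI : I ≤ P) :
    Nontrivial (k ⊗[R] (R ⧸ I)) := by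
  haveI : Nontrivial k := inferInstance
  exact Equiv.nontrivial (resFieldTensorQuot I hI).toEquiv

/-- `R/J ⊗ R/J ≃ R/J`. -/
noncomputable def quotTensorQuotSelf (J : Ideal R) :
    (R ⧸ J) ⊗[R] (R ⧸ J) ≃ₗ[R] (R ⧸ J) :=
  (TensorProduct.quotTensorEquivQuotSMul (R ⧸ J) J).trans
    ((Submodule.quotEquivOfEq _ _ (by
      rw [smul_top_quot]
      exact le_antisymm (Submodule.map_le_iff_le_comap.2
        (fun x hx => by simpa using hx)) bot_le)).trans
      (Submodule.quotEquivOfEqBot _ rfl))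
end MuQuot

section Cyclic
open TensorProduct IsLocalRing
variable {R X : Type*} [CommRing R] [IsLocalRing R] [AddCommGroup X] [Module R X]

local notation "k" => ResidueField R

lemma exists_gen_of_mu_le_one [Module.Finite R X] (h : mu R X ≤ 1) :
    ∃ x : X, ∀ y : X, ∃ c : R, c • x = y := by
  by_cases h0 : mu R X = 0
  · have hsub : Subsingleton (k ⊗[R] X) := Module.finrank_zero_iff.mp h0
    have : Subsingleton X := (IsLocalRing.subsingleton_tensorProduct (M := X)).mp hsub
    exact ⟨0, fun y => ⟨0, Subsingleton.elim _ _⟩⟩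
  · have h1 : mu R X = 1 := le_antisymm h (Nat.one_le_iff_ne_zero.2 h0)
    let bb : Module.Basis (Fin 1) k (k ⊗[R] X) := Module.finBasisOfFinrankEq k _ h1
    obtain ⟨x, hx⟩ := TensorProduct.mk_surjective R X k algMap_surj (bb 0)
    have hsp := IsLocalRing.span_eq_top_of_tmul_eq_basis (R := R) (fun _ : Fin 1 => x) bb
      (fun i => by rw [Fin.fin_one_eq_zero i]; exact hx)
    rw [Set.range_const] at hsp
    refine ⟨x, fun y => ?_⟩
    have hy : y ∈ Submodule.span R {x} := hsp ▸ Submodule.mem_top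
    exact Submodule.mem_span_singleton.1 hy

lemma eq_zero_or_one_of_idem {S : Type*} [CommRing S] [IsLocalRing S] {e : S}
    (he : e * e = e) : e = 0 ∨ e = 1 := by
  rcases IsLocalRing.isUnit_or_isUnit_one_sub_self e with hu | hu
  · right
    exact hu.mul_left_cancel (by rw [he, mul_one])
  · left
    have h0 : (1 - e) * e = 0 := by rw [sub_mul, one_mul, he, sub_self]
    have := hu.mul_left_cancel (show (1 - e) * e = (1 - e) * 0 by rw [h0, mul_zero])
    exact this
end Cyclic

/-- A witness that `M` is `2`-periodic: an exact sequence `0 → M → G → F → M → 0` with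
`G` and `F` finitely generated projective `R`-modules. -/
structure TwoPeriodicSeq (R M : Type*) [CommRing R] [AddCommGroup M] [Module R M] where
  G : Type*
  F : Type*
  [instAG : AddCommGroup G]
  [instMG : Module R G]
  [instAF : AddCommGroup F]
  [instMF : Module R F]
  finG : Module.Finite R G
  projG : Module.Projective R G
  finF : Module.Finite R F
  projF : Module.Projective R F
  i : M →ₗ[R] G
  φ : G →ₗ[R] F
  π : F →ₗ[R] M
  inj : Function.Injective i
  surj : Function.Surjective π
  ex1 : LinearMap.ker φ = LinearMap.range i
  ex2 : LinearMap.ker π = LinearMap.range φ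

section Key
open TensorProduct IsLocalRing LinearMap Function

variable {R : Type*} [CommRing R] [IsLocalRing R]

local notation "k" => ResidueField R
local notation "𝔪" => maximalIdeal R

set_option maxHeartbeats 1000000 in
lemma key_contradiction
    (h : ∀ I : Ideal R, I.FG → Nonempty (TwoPeriodicSeq R (R ⧸ I)))
    {a b : R} (ha : a ≠ 0) (hb : b ≠ 0)
    (hab : a ∉ Ideal.span ({b} : Set R)) (hba : b ∉ Ideal.span ({a} : Set R)) :
    False := by
  classical
  -- the ideal I = (a, b)
  set I : Ideal R := Ideal.span {a, b} with hI
  have haI : a ∈ I := Ideal.subset_span (by simp)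
  have hbI : b ∈ I := Ideal.subset_span (by simp)
  have haP : a ∈ 𝔪 := by
    rw [IsLocalRing.mem_maximalIdeal, mem_nonunits_iff]
    intro hua
    exact hba (by rw [Ideal.span_singleton_eq_top.2 hua]; trivial)
  have hbP : b ∈ 𝔪 := by
    rw [IsLocalRing.mem_maximalIdeal, mem_nonunits_iff]
    intro hub
    exact hab (by rw [Ideal.span_singleton_eq_top.2 hub]; trivial)
  have hIfg : I.FG := ⟨{a, b}, by simp [hI]⟩
  have hIP : I ≤ 𝔪 := by
    rw [hI, Ideal.span_le]
    rintro x hx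
    rcases hx with rfl | hx
    · exact haP
    · rw [Set.mem_singleton_iff] at hx; subst hx; exact hbP
  obtain ⟨S⟩ := h I hIfg
  letI := S.instAG; letI := S.instMG; letI := S.instAF; letI := S.instMF
  haveI := S.finG; haveI := S.projG; haveI := S.finF; haveI := S.projF
  -- the presentation map ψ
  set ψ : (R × R) →ₗ[R] R := a • LinearMap.fst R R R - b • LinearMap.snd R R R with hψ
  have hψ_apply : ∀ r s : R, ψ (r, s) = a * r - b * s := fun r s => by
    simp [hψ, smul_eq_mul]
  have hψ_range : range ψ = Submodule.restrictScalars R I := by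
    ext x
    simp only [LinearMap.mem_range, Submodule.restrictScalars_mem]
    constructor
    · rintro ⟨⟨r, s⟩, hrs⟩
      rw [hψ_apply] at hrs
      rw [hI, Ideal.mem_span_pair]
      exact ⟨r, -s, by linear_combination hrs⟩
    · intro hx
      rw [hI, Ideal.mem_span_pair] at hx
      obtain ⟨u, v, huv⟩ := hx
      exact ⟨(u, -v), by rw [hψ_apply]; linear_combination huv⟩
  set K := LinearMap.ker ψ with hK
  have hKmem : ∀ r s : R, ((r, s) ∈ K ↔ a * r - b * s = 0) := by
    intro r s
    rw [hK, LinearMap.mem_ker, hψ_apply]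
  -- corestriction of ψ to I
  have hψI : ∀ x, ψ x ∈ Submodule.restrictScalars R I := fun x =>
    hψ_range ▸ LinearMap.mem_range_self ψ x
  set ψ' := LinearMap.codRestrict (Submodule.restrictScalars R I) ψ hψI with hψ'
  have hψ's : Surjective ψ' := by
    rintro ⟨y, hy⟩
    have : y ∈ range ψ := hψ_range ▸ hy
    obtain ⟨x, hx⟩ := this
    exact ⟨x, Subtype.ext hx⟩
  have hkerψ' : ker ψ' = K := LinearMap.ker_codRestrict _ _ _
  -- Ω and the corestriction of φ
  set Ω := LinearMap.ker S.π with hΩ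
  set φ' := LinearMap.codRestrict Ω S.φ
    (fun x => by rw [hΩ, S.ex2]; exact LinearMap.mem_range_self _ x) with hφ'
  have hφ's : Surjective φ' := by
    rintro ⟨y, hy⟩
    rw [hΩ, S.ex2] at hy
    obtain ⟨x, hx⟩ := hy
    exact ⟨x, Subtype.ext hx⟩
  -- Schanuel #1 : Ω × R ≃ I × F
  obtain ⟨e₁⟩ := schanuel (R := R) (A := Ω) (P := S.F) (C := R ⧸ I)
    (B := Submodule.restrictScalars R I) (Q := R)
    Ω.subtype S.π S.surj (Submodule.range_subtype Ω) (Submodule.injective_subtype Ω)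
    (Submodule.restrictScalars R I).subtype (Submodule.mkQ (Submodule.restrictScalars R I))
    (Submodule.mkQ_surjective _)
    (by rw [Submodule.range_subtype]; exact (Submodule.ker_mkQ _).symm)
    (Submodule.injective_subtype _)
  -- e₁ : Ω × R ≃ₗ[R] I × S.F
  -- Schanuel #2
  set p₁ := LinearMap.prodMap ψ' (LinearMap.id (R := R) (M := S.F)) with hp₁
  have hp₁s : Surjective p₁ := by
    rintro ⟨y, f⟩
    obtain ⟨x, hx⟩ := hψ's y
    exact ⟨(x, f), by simp [hp₁, hx]⟩
  set iK : K →ₗ[R] ((R × R) × S.F) :=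
    (LinearMap.inl R (R × R) S.F) ∘ₗ K.subtype with hiK
  have hiKinj : Injective iK := by
    intro x y hxy
    apply Subtype.ext
    have := congrArg Prod.fst hxy
    simpa [hiK] using this
  have hiKrange : range iK = ker p₁ := by
    ext x
    constructor
    · rintro ⟨⟨w, hw⟩, rfl⟩
      have hw0 : ψ' w = 0 := Subtype.ext (by simpa [hψ'] using LinearMap.mem_ker.1 hw)
      simp [hiK, hp₁, LinearMap.mem_ker, hw0]
    · intro hx
      rw [LinearMap.mem_ker, hp₁] at hx
      have h1 : ψ' x.1 = 0 := by
        have := congrArg Prod.fst hx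
        simpa using this
      have h2 : x.2 = 0 := by
        have := congrArg Prod.snd hx
        simpa using this
      have hz : x.1 ∈ K := by
        have := Subtype.ext_iff.1 h1
        simpa [hψ', hK] using this
      refine ⟨⟨x.1, hz⟩, ?_⟩
      have : iK ⟨x.1, hz⟩ = (x.1, (0 : S.F)) := rfl
      rw [this]
      exact Prod.ext rfl h2.symm
  set q₂ := e₁.toLinearMap ∘ₗ LinearMap.prodMap φ' (LinearMap.id (R := R) (M := R)) with hq₂
  have hq₂s : Surjective q₂ := by
    rintro y
    obtain ⟨⟨w, r⟩, hw⟩ := e₁.surjective y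
    obtain ⟨g, hg⟩ := hφ's w
    exact ⟨(g, r), by simp [hq₂, hg, hw]⟩
  set iM : (R ⧸ I) →ₗ[R] (S.G × R) := (LinearMap.inl R S.G R) ∘ₗ S.i with hiM
  have hiMinj : Injective iM := by
    intro x y hxy
    apply S.inj
    have := congrArg Prod.fst hxy
    simpa [hiM] using this
  have hiMrange : range iM = ker q₂ := by
    ext x
    constructor
    · rintro ⟨m, rfl⟩
      rw [LinearMap.mem_ker, hq₂]
      have hφ0 : φ' (S.i m) = 0 := by
        apply Subtype.ext
        have : S.i m ∈ ker S.φ := by rw [S.ex1]; exact LinearMap.mem_range_self _ _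
        simpa [hφ'] using this
      have : iM m = ((S.i m : S.G), (0 : R)) := rfl
      rw [this]
      simp [hφ0]
    · intro hx
      rw [LinearMap.mem_ker, hq₂] at hx
      have h0 : LinearMap.prodMap φ' (LinearMap.id (R := R) (M := R)) x = 0 := by
        apply e₁.injective
        simpa using hx
      have h1 : φ' x.1 = 0 := by
        have := congrArg Prod.fst h0
        simpa using this
      have h2 : x.2 = 0 := by
        have := congrArg Prod.snd h0
        simpa using this
      have : x.1 ∈ ker S.φ := by
        have := Subtype.ext_iff.1 h1
        simpa [hφ'] using this
      rw [S.ex1] at this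
      obtain ⟨m, hm⟩ := this
      refine ⟨m, ?_⟩
      have : iM m = ((S.i m : S.G), (0 : R)) := rfl
      rw [this]
      exact Prod.ext hm h2.symm
  obtain ⟨e₂⟩ := schanuel (R := R) iK p₁ hp₁s hiKrange hiKinj iM q₂ hq₂s hiMrange hiMinj
  -- e₂ : K × (S.G × R) ≃ₗ[R] (R ⧸ I) × ((R × R) × S.F)
  -- finiteness
  haveI : Module.Finite R (R ⧸ I) := Module.Finite.of_surjective
    (Submodule.mkQ (Submodule.restrictScalars R I)) (Submodule.mkQ_surjective _)
  haveI hIfin : Module.Finite R (Submodule.restrictScalars R I) :=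
    Module.Finite.iff_fg.2 hIfg
  haveI hΩfin : Module.Finite R Ω := Module.Finite.of_surjective φ' hφ's
  haveI hKfin : Module.Finite R K := Module.Finite.of_surjective
    ((LinearMap.fst R K (S.G × R)) ∘ₗ e₂.symm.toLinearMap)
    (by
      intro y
      exact ⟨e₂ (y, 0), by simp⟩)
  -- μ computations
  have m1 : mu R Ω + mu R R = mu R (Submodule.restrictScalars R I) + mu R S.F := by
    have := mu_congr e₁
    rw [mu_prod] at this
    have hh := @mu_prod R _ _ (Submodule.restrictScalars R I) S.F _ _ _ _
      (Module.Finite.iff_fg.2 hIfg) _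
    exact this.trans hh
  have m2 : mu R Ω ≤ mu R S.G := mu_le_of_surjective φ' hφ's
  have m3 : mu R K + (mu R S.G + mu R R)
      = mu R (R ⧸ I) + ((mu R R + mu R R) + mu R S.F) := by
    have := mu_congr e₂
    simp only [mu_prod] at this
    omega
  have m4 : mu R R = 1 := mu_self
  have m5 : mu R (R ⧸ I) = 1 := mu_quot I hIP
  -- μ(I) ≥ 2 by minimality of the generators a, b
  have m6 : 2 ≤ mu R (Submodule.restrictScalars R I) := by
    by_contra hc
    push_neg at hc
    obtain ⟨x, hx⟩ := exists_gen_of_mu_le_one (Nat.lt_succ_iff.1 hc)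
    obtain ⟨c, hcx⟩ := hx ⟨a, haI⟩
    obtain ⟨d, hdx⟩ := hx ⟨b, hbI⟩
    have hca : c * (x : R) = a := by
      have := Subtype.ext_iff.1 hcx
      exact this
    have hdb : d * (x : R) = b := by
      have := Subtype.ext_iff.1 hdx
      exact this
    obtain ⟨u, v, huv⟩ := Ideal.mem_span_pair.1 (x.2 : (x : R) ∈ I)
    have hfix : (1 - (u * c + v * d)) * (x : R) = 0 := by
      have : (u * c + v * d) * (x : R) = (x : R) := by
        calc (u * c + v * d) * (x : R) = u * (c * (x : R)) + v * (d * (x : R)) := by ring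
        _ = u * a + v * b := by rw [hca, hdb]
        _ = (x : R) := huv
      linear_combination -this
    by_cases hU : IsUnit (1 - (u * c + v * d))
    · have hx0 : (x : R) = 0 := by
        obtain ⟨w, hw⟩ := hU
        calc (x : R) = (↑w⁻¹ * ↑w) * (x : R) := by simp
        _ = ↑w⁻¹ * ((1 - (u * c + v * d)) * (x : R)) := by rw [← hw]; ring
        _ = 0 := by rw [hfix, mul_zero]
      exact ha (by rw [← hca, hx0, mul_zero])
    · have hT : IsUnit (u * c + v * d) :=
        IsLocalRing.isUnit_of_mem_nonunits_one_sub_self _ (mem_nonunits_iff.2 hU)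
      have : ¬(u * c ∈ 𝔪 ∧ v * d ∈ 𝔪) := by
        rintro ⟨h1, h2⟩
        exact mem_nonunits_iff.1 ((IsLocalRing.mem_maximalIdeal _).1
          (Ideal.add_mem _ h1 h2)) hT
      by_cases h1 : u * c ∈ 𝔪
      · have h2 : v * d ∉ 𝔪 := fun h2 => this ⟨h1, h2⟩
        have hdU : IsUnit d := isUnit_of_mul_isUnit_right
          (not_not.1 (fun hn => h2 (mem_nonunits_iff.2 hn)))
        obtain ⟨w, hw⟩ := hdU
        apply hab
        rw [Ideal.mem_span_singleton']
        refine ⟨c * ↑w⁻¹, ?_⟩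
        have hxb : (↑w⁻¹ : R) * b = (x : R) := by
          rw [← hdb, ← hw, ← mul_assoc]
          simp
        rw [mul_assoc, hxb]
        exact hca
      · have hcU : IsUnit c := isUnit_of_mul_isUnit_right
          (not_not.1 (fun hn => h1 (mem_nonunits_iff.2 hn)))
        obtain ⟨w, hw⟩ := hcU
        apply hba
        rw [Ideal.mem_span_singleton']
        refine ⟨d * ↑w⁻¹, ?_⟩
        have hxa : (↑w⁻¹ : R) * a = (x : R) := by
          rw [← hca, ← hw, ← mul_assoc]
          simp
        rw [mul_assoc, hxa]
        exact hdb
  have hKle : mu R K ≤ 1 := by omega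
  -- K is cyclic
  obtain ⟨x₀, hx₀⟩ := exists_gen_of_mu_le_one hKle
  set r₀ := (x₀ : R × R).1 with hr₀
  set s₀ := (x₀ : R × R).2 with hs₀
  -- the pair (b, a) lies in K
  have hbaK : ((b, a) : R × R) ∈ K := (hKmem b a).2 (by ring)
  -- generating property, in coordinates
  have hgen : ∀ r s : R, a * r - b * s = 0 → ∃ c : R, c * r₀ = r ∧ c * s₀ = s := by
    intro r s hrs
    obtain ⟨c, hc⟩ := hx₀ ⟨(r, s), (hKmem r s).2 hrs⟩
    have := Subtype.ext_iff.1 hc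
    have h1 := congrArg Prod.fst this
    have h2 := congrArg Prod.snd this
    exact ⟨c, by simpa [smul_eq_mul, hr₀] using h1, by simpa [smul_eq_mul, hs₀] using h2⟩
  -- the annihilator of x₀
  set J := LinearMap.ker (LinearMap.toSpanSingleton R K x₀) with hJ
  by_cases hJtop : J = ⊤
  · -- x₀ = 0, hence K = 0, contradicting (b, a) ∈ K with a ≠ 0
    have hx00 : x₀ = 0 := by
      have h1 : (1 : R) ∈ J := hJtop ▸ Submodule.mem_top
      have := (LinearMap.mem_ker).1 h1
      simpa using this
    obtain ⟨c, hc1, hc2⟩ := hgen b a (by ring)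
    apply ha
    rw [← hc2, hs₀, hx00]
    simp
  · have hJP : J ≤ 𝔪 := IsLocalRing.le_maximalIdeal hJtop
    haveI : Nontrivial (R ⧸ J) := Ideal.Quotient.nontrivial_iff.2 hJtop
    haveI : IsLocalRing (R ⧸ J) := IsLocalRing.of_surjective' (Ideal.Quotient.mk J)
      Ideal.Quotient.mk_surjective
    have hks : Surjective (algebraMap R (R ⧸ J)) := Ideal.Quotient.mk_surjective
    -- K ≃ R/J
    have hts : Surjective (LinearMap.toSpanSingleton R K x₀) := fun y => hx₀ y
    have eqKJ : (R ⧸ J) ≃ₗ[R] K :=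
      LinearMap.quotKerEquivOfSurjective (LinearMap.toSpanSingleton R K x₀) hts
    -- retract maps
    set uu : (R ⧸ I) →ₗ[R] (K × (S.G × R)) :=
      e₂.symm.toLinearMap ∘ₗ LinearMap.inl R (R ⧸ I) ((R × R) × S.F) with huu
    set vv : (K × (S.G × R)) →ₗ[R] (R ⧸ I) :=
      LinearMap.fst R (R ⧸ I) ((R × R) × S.F) ∘ₗ e₂.toLinearMap with hvv
    have hvu : vv ∘ₗ uu = LinearMap.id := by
      apply LinearMap.ext
      intro m
      simp [huu, hvv]
    -- tensor with R/J
    set uT := LinearMap.lTensor (R ⧸ J) uu with huT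
    set vT := LinearMap.lTensor (R ⧸ J) vv with hvT
    have hvuT : vT ∘ₗ uT = LinearMap.id := by
      rw [huT, hvT, ← LinearMap.lTensor_comp, hvu, LinearMap.lTensor_id]
    -- projectivity of (R/J) ⊗ (K × (G × R)) over R/J
    have eK : ((R ⧸ J) ⊗[R] K) ≃ₗ[R] (R ⧸ J) :=
      (LinearEquiv.lTensor (R ⧸ J) eqKJ.symm).trans (quotTensorQuotSelf J)
    haveI pK : Module.Projective (R ⧸ J) ((R ⧸ J) ⊗[R] K) :=
      Module.Projective.of_equiv (eK.extendScalarsOfSurjective hks).symm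
    haveI pGR : Module.Projective (R ⧸ J) ((R ⧸ J) ⊗[R] (S.G × R)) := inferInstance
    have eW : ((R ⧸ J) ⊗[R] (K × (S.G × R))) ≃ₗ[R]
        (((R ⧸ J) ⊗[R] K) × ((R ⧸ J) ⊗[R] (S.G × R))) :=
      TensorProduct.prodRight R R (R ⧸ J) K (S.G × R)
    haveI pW : Module.Projective (R ⧸ J) ((R ⧸ J) ⊗[R] (K × (S.G × R))) :=
      Module.Projective.of_equiv (eW.extendScalarsOfSurjective hks).symm
    haveI pT : Module.Projective (R ⧸ J) ((R ⧸ J) ⊗[R] (R ⧸ I)) :=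
      Module.Projective.of_split (uT.extendScalarsOfSurjective hks)
        (vT.extendScalarsOfSurjective hks)
        (by
          apply LinearMap.ext
          intro x
          have := LinearMap.ext_iff.1 hvuT x
          simpa using this)
    -- the canonical surjection ρ : R/J → (R/J) ⊗ (R/I)
    set ρ : (R ⧸ J) →ₗ[R] ((R ⧸ J) ⊗[R] (R ⧸ I)) :=
      (TensorProduct.mk R (R ⧸ J) (R ⧸ I)).flip (Ideal.Quotient.mk I 1) with hρ
    have hρ_apply : ∀ c : R ⧸ J, ρ c = c ⊗ₜ[R] (Ideal.Quotient.mk I 1) := fun c => rfl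
    have hρs : Surjective ρ := by
      intro z
      induction z using TensorProduct.induction_on with
      | zero => exact ⟨0, map_zero ρ⟩
      | tmul c m =>
        obtain ⟨r, rfl⟩ := Ideal.Quotient.mk_surjective m
        refine ⟨r • c, ?_⟩
        rw [hρ_apply, TensorProduct.smul_tmul]
        congr 1
        simp [Algebra.smul_def, Ideal.Quotient.algebraMap_eq]
      | add x y hx hy =>
        obtain ⟨cx, hcx⟩ := hx
        obtain ⟨cy, hcy⟩ := hy
        exact ⟨cx + cy, by rw [map_add, hcx, hcy]⟩
    set ρ' := ρ.extendScalarsOfSurjective hks with hρ'def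
    have hρ's : Surjective ρ' := fun z => hρs z
    obtain ⟨σ, hσ⟩ := Module.projective_lifting_property ρ' LinearMap.id hρ's
    have hσ' : ∀ t, ρ' (σ t) = t := by
      intro t
      have := LinearMap.ext_iff.1 hσ t
      simpa using this
    set ee := σ (ρ' 1) with hee
    have hidem : ee * ee = ee := by
      have h1 : ρ' ee = ρ' 1 := hσ' (ρ' 1)
      calc ee * ee = ee • σ (ρ' 1) := by rw [smul_eq_mul, hee]
      _ = σ (ee • ρ' 1) := (map_smul σ ee (ρ' 1)).symm
      _ = σ (ρ' (ee • 1)) := by rw [map_smul ρ']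
      _ = σ (ρ' ee) := by rw [smul_eq_mul, mul_one]
      _ = ee := by rw [h1, hee]
    rcases eq_zero_or_one_of_idem hidem with he0 | he1
    · -- e = 0 : the tensor product would be zero, but it is nontrivial
      have hρ10 : ρ' 1 = 0 := by
        have h1 : ρ' ee = ρ' 1 := hσ' (ρ' 1)
        rw [he0, map_zero] at h1
        exact h1.symm
      have hzero : ∀ z : ((R ⧸ J) ⊗[R] (R ⧸ I)), z = 0 := by
        intro z
        obtain ⟨c, rfl⟩ := hρ's z
        calc ρ' c = c • ρ' 1 := by rw [← map_smul, smul_eq_mul, mul_one]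
        _ = 0 := by rw [hρ10, smul_zero]
      have hmq : Surjective (Submodule.mapQ J (IsLocalRing.maximalIdeal R)
          LinearMap.id hJP) := by
        intro y
        obtain ⟨x, rfl⟩ := Submodule.mkQ_surjective _ y
        exact ⟨Submodule.Quotient.mk x, rfl⟩
      have hτs : Surjective (LinearMap.rTensor (R ⧸ I)
          (Submodule.mapQ J (IsLocalRing.maximalIdeal R) LinearMap.id hJP)) :=
        LinearMap.rTensor_surjective (R ⧸ I) hmq
      haveI hnt : Nontrivial ((IsLocalRing.ResidueField R) ⊗[R] (R ⧸ I)) :=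
        nontrivial_resFieldTensorQuot I hIP
      obtain ⟨z1, z2, hz⟩ := exists_pair_ne ((IsLocalRing.ResidueField R) ⊗[R] (R ⧸ I))
      obtain ⟨w1, hw1⟩ := hτs z1
      obtain ⟨w2, hw2⟩ := hτs z2
      exact hz (by rw [← hw1, ← hw2, hzero w1, hzero w2])
    · -- e = 1 : I ⊆ J, hence a • x₀ = 0
      have hkey : ∀ t, t ∈ I → t ∈ J := by
        intro t ht
        have h0 : ρ' (Ideal.Quotient.mk J t) = 0 := by
          have h00 : ρ' (Ideal.Quotient.mk J t) = ρ (Ideal.Quotient.mk J t) := rfl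
          rw [h00, hρ_apply]
          have h1 : (Ideal.Quotient.mk J t) = t • (1 : R ⧸ J) := by
            simp [Algebra.smul_def, Ideal.Quotient.algebraMap_eq]
          rw [h1, TensorProduct.smul_tmul]
          have h2 : t • (Ideal.Quotient.mk I 1) = (0 : R ⧸ I) := by
            have : t • (Ideal.Quotient.mk I 1) = Ideal.Quotient.mk I t := by
              simp [Algebra.smul_def, Ideal.Quotient.algebraMap_eq]
            rw [this]
            exact Ideal.Quotient.eq_zero_iff_mem.2 ht
          rw [h2, TensorProduct.tmul_zero]
        have hz : Ideal.Quotient.mk J t = 0 := by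
          calc Ideal.Quotient.mk J t = (Ideal.Quotient.mk J t) • ee := by
                rw [he1, smul_eq_mul, mul_one]
          _ = σ ((Ideal.Quotient.mk J t) • ρ' 1) := by rw [hee, map_smul]
          _ = σ (ρ' ((Ideal.Quotient.mk J t) • 1)) := by rw [map_smul ρ']
          _ = σ (ρ' (Ideal.Quotient.mk J t)) := by rw [smul_eq_mul, mul_one]
          _ = 0 := by rw [h0, map_zero]
        exact Ideal.Quotient.eq_zero_iff_mem.1 hz
      have haJ : a • x₀ = (0 : K) := by
        have := LinearMap.mem_ker.1 (hkey a haI)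
        simpa using this
      have har1 : a * r₀ = 0 := by
        have := congrArg (fun z : K => ((z : R × R)).1) haJ
        simpa [hr₀, smul_eq_mul] using this
      -- the endgame
      obtain ⟨t, ht1, ht2⟩ := hgen b a (by ring)
      obtain ⟨c, hc1, hc2⟩ := hgen r₀ 0 (by rw [mul_zero, sub_zero]; exact har1)
      by_cases hcU : IsUnit c
      · obtain ⟨w, hw⟩ := hcU
        have hs00 : s₀ = 0 := by
          calc s₀ = ↑w⁻¹ * (c * s₀) := by rw [← hw, ← mul_assoc]; simp
          _ = 0 := by rw [hc2, mul_zero]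
        exact ha (by rw [← ht2, hs00, mul_zero])
      · have hU : IsUnit (1 - c) :=
          IsLocalRing.isUnit_one_sub_self_of_mem_nonunits c (mem_nonunits_iff.2 hcU)
        obtain ⟨w, hw⟩ := hU
        have hr00 : r₀ = 0 := by
          have h1c : (1 - c) * r₀ = 0 := by linear_combination -hc1
          calc r₀ = ↑w⁻¹ * ((1 - c) * r₀) := by rw [← hw, ← mul_assoc]; simp
          _ = 0 := by rw [h1c, mul_zero]
        exact hb (by rw [← ht1, hr00, mul_zero])
end Key

/-- If `R` is local and every finitely presented cyclic `R`-module is `2`-periodic, then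
any two nonzero elements of the maximal ideal generate comparable principal ideals;
hence `R` is a valuation ring (its ideals are totally ordered). -/
theorem stmt_15 {R : Type*} [CommRing R] [IsLocalRing R]
    (h : ∀ I : Ideal R, I.FG → Nonempty (TwoPeriodicSeq R (R ⧸ I))) :
    (∀ a b : R, a ≠ 0 → b ≠ 0 →
      a ∈ IsLocalRing.maximalIdeal R → b ∈ IsLocalRing.maximalIdeal R →
      Ideal.span ({a} : Set R) ≤ Ideal.span {b} ∨ Ideal.span ({b} : Set R) ≤ Ideal.span {a}) ∧
    (∀ I J : Ideal R, I ≤ J ∨ J ≤ I) := by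
  have tot : ∀ x y : R, x ∈ Ideal.span ({y} : Set R) ∨ y ∈ Ideal.span ({x} : Set R) := by
    intro x y
    by_cases hx : x = 0
    · left; rw [hx]; exact zero_mem _
    by_cases hy : y = 0
    · right; rw [hy]; exact zero_mem _
    by_cases hxu : IsUnit x
    · right; rw [Ideal.span_singleton_eq_top.2 hxu]; trivial
    by_cases hyu : IsUnit y
    · left; rw [Ideal.span_singleton_eq_top.2 hyu]; trivial
    by_cases h1 : x ∈ Ideal.span ({y} : Set R)
    · left; exact h1
    by_cases h2 : y ∈ Ideal.span ({x} : Set R)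
    · right; exact h2
    exact (key_contradiction h hx hy h1 h2).elim
  constructor
  · intro a b ha hb _ _
    rcases tot a b with h1 | h2
    · left; exact (Submodule.span_singleton_le_iff_mem _ _).2 h1
    · right; exact (Submodule.span_singleton_le_iff_mem _ _).2 h2
  · intro I J
    by_contra hc
    push_neg at hc
    obtain ⟨hIJ, hJI⟩ := hc
    obtain ⟨x, hxI, hxJ⟩ := SetLike.not_le_iff_exists.1 hIJ
    obtain ⟨y, hyJ, hyI⟩ := SetLike.not_le_iff_exists.1 hJI
    rcases tot x y with h1 | h2
    · exact hxJ ((Submodule.span_singleton_le_iff_mem _ _).2 hyJ h1)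
    · exact hyI ((Submodule.span_singleton_le_iff_mem _ _).2 hxI h2)
end

section
/- Let R be a local commutative ring which is a valuation ring (not a field) such that there exists a nonzero non-unit a ∈ R with (0 : a) nonzero and finitely generated. Then for every r ∈ R the annihilator (0 : r) is a principal ideal. -/
/-!
Write `(0 : a) = (b)` with `b ≠ 0`. In a local ring whose divisibility is total, such a pair
dualizes: `(0 : b) = (a)`. If `(0 : p) = (s * y) ≠ 0`, then `(0 : p * s) = (y)`; this covers
every multiple of `b` (taking `p = b`). Every other `r` divides `b`, say `b = r * d`; then
`(0 : a * d) = (r)`, and dualizing gives `(0 : r) = (a * d)`.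
-/

instance PreValuationRing.isBezout {R : Type*} [CommRing R] [PreValuationRing R] :
    IsBezout R := by
  refine IsBezout.iff_span_pair_isPrincipal.mpr fun x y => ?_
  rw [Ideal.span_insert]
  rcases ValuationRing.dvd_total x y with h | h
  · rw [sup_eq_left.mpr (Ideal.span_singleton_le_span_singleton.mpr h)]
    exact ⟨x, rfl⟩
  · rw [sup_eq_right.mpr (Ideal.span_singleton_le_span_singleton.mpr h)]
    exact ⟨y, rfl⟩

theorem IsLocalRing.eq_zero_of_eq_mul_of_not_isUnit {R : Type*} [CommRing R] [IsLocalRing R]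
    {c x : R} (h : x = c * x) (hc : ¬IsUnit c) : x = 0 :=
  (IsLocalRing.isUnit_one_sub_self_of_mem_nonunits c hc).mul_right_eq_zero.mp
    (by linear_combination h)

theorem Ideal.annihilator_span_singleton_eq_span_singleton_iff {R : Type*} [CommRing R]
    {p q : R} : (span {p}).annihilator = span {q} ↔ ∀ x, x * p = 0 ↔ q ∣ x := by
  simp only [SetLike.ext_iff, mem_span_singleton]
  exact forall_congr' fun x => by
    rw [show span {p} = Submodule.span R {p} from rfl, Submodule.mem_annihilator_span_singleton,
      smul_eq_mul]

section PreValuationRing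

variable {R : Type*} [CommRing R] [PreValuationRing R]

open Ideal

theorem dvd_of_mul_eq_zero_of_mul_ne_zero {s y w : R} (hsy : s * y ≠ 0) (hw : w * s = 0) :
    y ∣ w := by
  rcases ValuationRing.dvd_total w y with ⟨v, rfl⟩ | h
  · exact absurd (by linear_combination v * hw) hsy
  · exact h

theorem annihilator_span_mul_eq {p s y : R} (hsy : s * y ≠ 0)
    (h : (span {p}).annihilator = span {s * y}) : (span {p * s}).annihilator = span {y} := by
  rw [annihilator_span_singleton_eq_span_singleton_iff] at h ⊢
  have hp : s * y * p = 0 := (h _).mpr dvd_rfl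
  refine fun x => ⟨fun hx => ?_, ?_⟩
  · obtain ⟨z, hz⟩ := (h (x * s)).mp (by linear_combination hx)
    obtain ⟨w, hw⟩ := dvd_of_mul_eq_zero_of_mul_ne_zero hsy
      (show (x - y * z) * s = 0 by linear_combination hz)
    exact ⟨z + w, by linear_combination hw⟩
  · rintro ⟨u, rfl⟩
    linear_combination u * hp

theorem isPrincipal_annihilator_span_mul {p q s : R} (hq : q ≠ 0) (hps : p * s ≠ 0)
    (h : (span {p}).annihilator = span {q}) : (span {p * s}).annihilator.IsPrincipal := by
  have hqp : q * p = 0 :=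
    (annihilator_span_singleton_eq_span_singleton_iff.mp h q).mpr dvd_rfl
  rcases ValuationRing.dvd_total s q with ⟨y, rfl⟩ | ⟨t, rfl⟩
  · exact ⟨y, annihilator_span_mul_eq hq h⟩
  · exact absurd (by linear_combination t * hqp) hps

variable [IsLocalRing R]

theorem annihilator_span_symm {a b : R} (ha : a ≠ 0) (hb : b ≠ 0)
    (h : (span {a}).annihilator = span {b}) : (span {b}).annihilator = span {a} := by
  rw [annihilator_span_singleton_eq_span_singleton_iff] at h ⊢
  have hba : b * a = 0 := (h b).mpr dvd_rfl
  refine fun x => ⟨fun hx => ?_, fun ⟨u, hu⟩ => by linear_combination u * hba + b * hu⟩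
  rcases ValuationRing.dvd_total a x with hax | ⟨t, rfl⟩
  · exact hax
  by_cases ht : IsUnit t
  · exact (Associated.symm ⟨ht.unit, rfl⟩).dvd
  rcases ValuationRing.dvd_total t b with ⟨y, rfl⟩ | ⟨m, rfl⟩
  · obtain ⟨w, hw⟩ := (h y).mp (by linear_combination hx)
    exact absurd (IsLocalRing.eq_zero_of_eq_mul_of_not_isUnit (c := t * w)
      (by linear_combination t * hw) fun htw => ht (isUnit_of_mul_isUnit_left htw)) hb
  · exact absurd (by linear_combination m * hx) ha

theorem annihilator_span_left_factor {a r d : R} (hrd : r * d ≠ 0)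
    (h : (span {a}).annihilator = span {r * d}) : (span {r}).annihilator = span {a * d} := by
  have hra : r * d * a = 0 :=
    (annihilator_span_singleton_eq_span_singleton_iff.mp h _).mpr dvd_rfl
  by_cases hr : IsUnit r
  · have had : a * d = 0 := hr.mul_right_eq_zero.mp (by linear_combination hra)
    rw [annihilator_span_singleton_eq_span_singleton_iff, had]
    exact fun x => by rw [hr.mul_left_eq_zero, zero_dvd_iff]
  have had : a * d ≠ 0 := by
    intro had
    obtain ⟨z, hz⟩ := (annihilator_span_singleton_eq_span_singleton_iff.mp h d).mp
      (by linear_combination had)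
    have hd : d = 0 := IsLocalRing.eq_zero_of_eq_mul_of_not_isUnit (c := r * z)
      (by linear_combination hz) fun h => hr (isUnit_of_mul_isUnit_left h)
    exact hrd (by rw [hd, mul_zero])
  rw [mul_comm r d] at h hrd
  exact annihilator_span_symm had (right_ne_zero_of_mul hrd) (annihilator_span_mul_eq hrd h)

theorem isPrincipal_annihilator_span_singleton {a b : R} (ha : a ≠ 0) (hb : b ≠ 0)
    (h : (span {a}).annihilator = span {b}) (r : R) : (span {r}).annihilator.IsPrincipal := by
  rcases ValuationRing.dvd_total b r with ⟨s, rfl⟩ | ⟨d, rfl⟩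
  · by_cases hbs : b * s = 0
    · rw [hbs, span_singleton_zero, Submodule.annihilator_bot]
      exact ⟨1, span_singleton_one.symm⟩
    · exact isPrincipal_annihilator_span_mul ha hbs (annihilator_span_symm ha hb h)
  · exact ⟨a * d, annihilator_span_left_factor hb h⟩

end PreValuationRing

theorem stmt_16_general {R : Type*} [CommRing R] [IsLocalRing R]
    (hval : ∀ I J : Ideal R, I ≤ J ∨ J ≤ I)
    (a : R) (ha0 : a ≠ 0)
    (hann0 : (Ideal.span ({a} : Set R)).annihilator ≠ ⊥)
    (hannfg : (Ideal.span ({a} : Set R)).annihilator.FG) :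
    ∀ r : R, ((Ideal.span ({r} : Set R)).annihilator).IsPrincipal := by
  have : PreValuationRing R := PreValuationRing.iff_ideal_total.mpr ⟨hval⟩
  obtain ⟨b, hb⟩ := IsBezout.isPrincipal_of_FG _ hannfg
  have hb0 : b ≠ 0 := by
    rintro rfl
    exact hann0 (by rw [hb, Submodule.span_singleton_eq_bot])
  exact isPrincipal_annihilator_span_singleton ha0 hb0 hb

/-- Let `R` be a local valuation ring (ideals totally ordered) which is not a field,
and suppose some nonzero non-unit `a` has nonzero finitely generated annihilator.
Then the annihilator of every element of `R` is a principal ideal. -/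
theorem stmt_16 {R : Type*} [CommRing R] [IsLocalRing R]
    (hval : ∀ I J : Ideal R, I ≤ J ∨ J ≤ I) (hnf : ¬IsField R)
    (a : R) (ha0 : a ≠ 0) (hau : ¬IsUnit a)
    (hann0 : (Ideal.span ({a} : Set R)).annihilator ≠ ⊥)
    (hannfg : (Ideal.span ({a} : Set R)).annihilator.FG) :
    ∀ r : R, ((Ideal.span ({r} : Set R)).annihilator).IsPrincipal :=
  stmt_16_general hval a ha0 hann0 hannfg
end

section
/- Let D be a commutative valuation domain which is not a field, U a nonzero divisible torsion uniserial D-module such that (0 :_D u) is a principal ideal for every u ∈ U. Then the trivial extension R = D ⋉ U is a local valuation ring in which the annihilator of the element (0, e) is a nonzero principal ideal for each 0 ≠ e ∈ U. -/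
/-!
An element `x = (a, u)` of `D ⋉ U` with `a ≠ 0` divides every `y` with `a ∣ y.fst`, because the
correction needed in the `U`-component can be divided by `a`. Elements with zero first component
are compared through the uniseriality of `U`. Hence divisibility in `D ⋉ U` is total, which makes
it a local ring with totally ordered ideals. If `(0 :_D e) = (d)`, then `d ≠ 0` since `e` is
torsion, and the same division argument shows `(0 :_R (0, e)) = ((d, 0))`.
-/

open TrivSqZeroExt

namespace TrivSqZeroExt

variable {D : Type*} [CommRing D] {U : Type*} [AddCommGroup U] [Module D U] [Module Dᵐᵒᵖ U]
  [IsCentralScalar D U]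

theorem dvd_of_fst_dvd {x y : TrivSqZeroExt D U} (hx : ∀ u : U, ∃ v, x.fst • v = u)
    (h : x.fst ∣ y.fst) : x ∣ y := by
  obtain ⟨c, hc⟩ := h
  obtain ⟨w, hw⟩ := hx (y.snd - c • x.snd)
  refine ⟨inl c + inr w, TrivSqZeroExt.ext ?_ ?_⟩
  · simp [hc]
  · simp [snd_mul, op_smul_eq_smul, hw]

theorem inr_dvd_inr_of_mem_span {u v : U} (h : v ∈ Submodule.span D {u}) :
    (inr u : TrivSqZeroExt D U) ∣ inr v := by
  obtain ⟨c, rfl⟩ := Submodule.mem_span_singleton.mp h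
  exact ⟨inl c, by rw [mul_comm, inl_mul_inr]⟩

theorem dvd_total_of_fst_eq_zero (huni : ∀ N N' : Submodule D U, N ≤ N' ∨ N' ≤ N)
    {x y : TrivSqZeroExt D U} (hx : x.fst = 0) (hy : y.fst = 0) : x ∣ y ∨ y ∣ x := by
  rw [show x = inr x.snd from TrivSqZeroExt.ext hx rfl,
    show y = inr y.snd from TrivSqZeroExt.ext hy rfl]
  rcases huni (Submodule.span D {x.snd}) (Submodule.span D {y.snd}) with h | h
  · exact .inr (inr_dvd_inr_of_mem_span (h (Submodule.mem_span_singleton_self _)))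
  · exact .inl (inr_dvd_inr_of_mem_span (h (Submodule.mem_span_singleton_self _)))

theorem preValuationRing [PreValuationRing D]
    (hdiv : ∀ a : D, a ≠ 0 → ∀ u : U, ∃ v : U, a • v = u)
    (huni : ∀ N N' : Submodule D U, N ≤ N' ∨ N' ≤ N) : PreValuationRing (TrivSqZeroExt D U) := by
  refine PreValuationRing.iff_dvd_total.mpr ⟨fun x y => ?_⟩
  rcases ValuationRing.dvd_total x.fst y.fst with h | h
  · by_cases hx : x.fst = 0
    · exact dvd_total_of_fst_eq_zero huni hx (zero_dvd_iff.mp (hx ▸ h))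
    · exact .inl (dvd_of_fst_dvd (hdiv _ hx) h)
  · by_cases hy : y.fst = 0
    · exact dvd_total_of_fst_eq_zero huni (zero_dvd_iff.mp (hy ▸ h)) hy
    · exact .inr (dvd_of_fst_dvd (hdiv _ hy) h)

theorem mem_annihilator_span_inr {e : U} {r : TrivSqZeroExt D U} :
    r ∈ (Ideal.span {inr e}).annihilator ↔ r.fst • e = 0 := by
  rw [← Ideal.submodule_span_eq, Submodule.mem_annihilator_span_singleton, smul_eq_mul,
    TrivSqZeroExt.ext_iff]
  simp [snd_mul]

theorem annihilator_span_inr_eq_span_inl {e : U} {d : D} (hd : ∀ u : U, ∃ v, d • v = u)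
    (hann : (Submodule.span D {e}).annihilator = Ideal.span {d}) :
    (Ideal.span {inr e}).annihilator = Ideal.span {(inl d : TrivSqZeroExt D U)} := by
  ext r
  rw [mem_annihilator_span_inr, ← Submodule.mem_annihilator_span_singleton, hann,
    Ideal.mem_span_singleton, Ideal.mem_span_singleton]
  constructor
  · exact dvd_of_fst_dvd (x := inl d) hd
  · rintro ⟨c, rfl⟩
    exact ⟨c.fst, by simp⟩

end TrivSqZeroExt

theorem stmt_17_general {D : Type*} [CommRing D]
    (hval : ∀ I J : Ideal D, I ≤ J ∨ J ≤ I)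
    {U : Type*} [AddCommGroup U] [Module D U] [Module Dᵐᵒᵖ U] [IsCentralScalar D U] [Nontrivial U]
    (hdiv : ∀ a : D, a ≠ 0 → ∀ u : U, ∃ v : U, a • v = u)
    (htor : ∀ u : U, ∃ a : D, a ≠ 0 ∧ a • u = 0)
    (huni : ∀ N N' : Submodule D U, N ≤ N' ∨ N' ≤ N)
    (hprann : ∀ u : U, ((Submodule.span D ({u} : Set U)).annihilator).IsPrincipal) :
    IsLocalRing (TrivSqZeroExt D U) ∧
    (∀ I J : Ideal (TrivSqZeroExt D U), I ≤ J ∨ J ≤ I) ∧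
    ∀ e : U, e ≠ 0 →
      (Ideal.span ({TrivSqZeroExt.inr e} : Set (TrivSqZeroExt D U))).annihilator ≠ ⊥ ∧
      ((Ideal.span ({TrivSqZeroExt.inr e} : Set (TrivSqZeroExt D U))).annihilator).IsPrincipal := by
  have : PreValuationRing D := PreValuationRing.iff_ideal_total.mpr ⟨hval⟩
  have : PreValuationRing (TrivSqZeroExt D U) := preValuationRing hdiv huni
  refine ⟨inferInstance, Std.Total.total, fun e _ => ?_⟩
  obtain ⟨d, hd⟩ := hprann e
  obtain ⟨a, ha0, hae⟩ := htor e
  have hd0 : d ≠ 0 := by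
    rintro rfl
    rw [← Submodule.mem_annihilator_span_singleton, hd, Submodule.span_singleton_eq_bot.mpr rfl]
      at hae
    exact ha0 hae
  rw [annihilator_span_inr_eq_span_inl (hdiv d hd0) hd]
  exact ⟨by simpa using inl_injective.ne hd0, ⟨_, rfl⟩⟩

/-- Let `D` be a valuation domain which is not a field and `U` a nonzero divisible
torsion uniserial `D`-module with principal annihilators.  Then `R = D ⋉ U` is a local
valuation ring and, for every `0 ≠ e ∈ U`, the annihilator of `(0, e)` in `R` is a
nonzero principal ideal. -/
theorem stmt_17 {D : Type*} [CommRing D] [IsDomain D]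
    (hval : ∀ I J : Ideal D, I ≤ J ∨ J ≤ I) (hnf : ¬IsField D)
    {U : Type*} [AddCommGroup U] [Module D U] [Module Dᵐᵒᵖ U] [IsCentralScalar D U] [Nontrivial U]
    (hdiv : ∀ a : D, a ≠ 0 → ∀ u : U, ∃ v : U, a • v = u)
    (htor : ∀ u : U, ∃ a : D, a ≠ 0 ∧ a • u = 0)
    (huni : ∀ N N' : Submodule D U, N ≤ N' ∨ N' ≤ N)
    (hprann : ∀ u : U, ((Submodule.span D ({u} : Set U)).annihilator).IsPrincipal) :
    IsLocalRing (TrivSqZeroExt D U) ∧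
    (∀ I J : Ideal (TrivSqZeroExt D U), I ≤ J ∨ J ≤ I) ∧
    ∀ e : U, e ≠ 0 →
      (Ideal.span ({TrivSqZeroExt.inr e} : Set (TrivSqZeroExt D U))).annihilator ≠ ⊥ ∧
      ((Ideal.span ({TrivSqZeroExt.inr e} : Set (TrivSqZeroExt D U))).annihilator).IsPrincipal :=
  stmt_17_general hval hdiv htor huni hprann
end

section
/- Let R be a commutative ring and suppose R = ∏_{λ∈Λ} R_λ is a direct product of commutative rings each of which is arithmetical. Then R is arithmetical, i.e., for all ideals A, B, C of R, (A + B) ∩ C = (A ∩ C) + (B ∩ C). -/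
/-!
Arithmeticity is equivalent to an elementwise condition: for all `a b` there is a `u` with
`b ∣ u * a` and `a ∣ (1 - u) * b` (apply distributivity to `a + b ∈ ((a) + (b)) ∩ (a + b)`;
conversely split `a + b = (1 - u) (a + b) + u (a + b)` with `(1 - u) (a + b) ∈ (a)`,
`u (a + b) ∈ (b)`). Divisibility in a product is checked componentwise, so the elementwise
condition passes to products.
-/

def HasDvdSplitting (S : Type*) [CommRing S] : Prop :=
  ∀ a b : S, ∃ u : S, b ∣ u * a ∧ a ∣ (1 - u) * b

section
variable {S : Type*} [CommRing S]

theorem hasDvdSplitting_of_ideal_distrib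
    (h : ∀ A B C : Ideal S, (A ⊔ B) ⊓ C = (A ⊓ C) ⊔ (B ⊓ C)) : HasDvdSplitting S := by
  intro a b
  have hmem : a + b ∈ (Ideal.span {a} ⊔ Ideal.span {b}) ⊓ Ideal.span {a + b} :=
    ⟨Submodule.add_mem_sup (Ideal.mem_span_singleton_self a) (Ideal.mem_span_singleton_self b),
      Ideal.mem_span_singleton_self _⟩
  rw [h] at hmem
  obtain ⟨x, ⟨hxa, hxc⟩, y, ⟨hyb, -⟩, hxy⟩ := Submodule.mem_sup.mp hmem
  obtain ⟨p, hp⟩ := Ideal.mem_span_singleton'.mp hxa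
  obtain ⟨s, hs⟩ := Ideal.mem_span_singleton'.mp hxc
  obtain ⟨q, hq⟩ := Ideal.mem_span_singleton'.mp hyb
  refine ⟨1 - s, ⟨q + s - 1, ?_⟩, ⟨p - s, ?_⟩⟩
  · linear_combination -hxy - hs - hq
  · linear_combination hs - hp

theorem ideal_distrib_of_hasDvdSplitting (h : HasDvdSplitting S) (A B C : Ideal S) :
    (A ⊔ B) ⊓ C = (A ⊓ C) ⊔ (B ⊓ C) := by
  refine le_antisymm ?_ (sup_le (inf_le_inf_right _ le_sup_left) (inf_le_inf_right _ le_sup_right))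
  rintro _ ⟨hab, hc⟩
  obtain ⟨a, ha, b, hb, rfl⟩ := Submodule.mem_sup.mp hab
  obtain ⟨u, ⟨v, hv⟩, ⟨w, hw⟩⟩ := h a b
  have hA : (1 - u) * (a + b) ∈ A := by
    rw [show (1 - u) * (a + b) = (1 - u + w) * a by linear_combination hw]
    exact A.mul_mem_left _ ha
  have hB : u * (a + b) ∈ B := by
    rw [show u * (a + b) = (u + v) * b by linear_combination hv]
    exact B.mul_mem_left _ hb
  rw [show a + b = (1 - u) * (a + b) + u * (a + b) by ring]
  exact Submodule.add_mem_sup ⟨hA, C.mul_mem_left _ hc⟩ ⟨hB, C.mul_mem_left _ hc⟩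

end

theorem Pi.hasDvdSplitting {Λ : Type*} {R : Λ → Type*} [∀ l, CommRing (R l)]
    (h : ∀ l, HasDvdSplitting (R l)) : HasDvdSplitting (∀ l, R l) := by
  intro a b
  choose u hu using fun l => h l (a l) (b l)
  choose v hv using fun l => (hu l).1
  choose w hw using fun l => (hu l).2
  exact ⟨u, ⟨v, funext hv⟩, ⟨w, funext hw⟩⟩

/-- A direct product of arithmetical commutative rings is arithmetical: if each `R_λ`
satisfies the ideal-distributivity law `(A + B) ∩ C = (A ∩ C) + (B ∩ C)`, then so does
`∏_λ R_λ`. -/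
theorem stmt_18 {Λ : Type*} (Rl : Λ → Type*) [∀ l, CommRing (Rl l)]
    (h : ∀ (l : Λ) (A B C : Ideal (Rl l)), (A ⊔ B) ⊓ C = (A ⊓ C) ⊔ (B ⊓ C)) :
    ∀ A B C : Ideal (∀ l, Rl l), (A ⊔ B) ⊓ C = (A ⊓ C) ⊔ (B ⊓ C) :=
  ideal_distrib_of_hasDvdSplitting
    (Pi.hasDvdSplitting fun l => hasDvdSplitting_of_ideal_distrib (h l))
end
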